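/- arXiv:2211.12332 — 9 statements merged into one kernel-verified Lean document; each statement's English description precedes it below -/
import Mathlib

section
/- Let $X$ be a real Banach space, $x_0 \in X$, $f_0 \in X^*$ with $\|x_0\| = \|f_0\| = 1$, $\langle f_0, x_0\rangle = 1$, and $0 < \delta < 1$. Let $\psi : X \to [0,\infty)$ be the function assigning to each $y$ the unique $t \geq 0$ with $t = (1-\delta)\|y + (t - \langle f_0, y\rangle)x_0\|$. Then $\psi$ is subadditive: $\psi(y + z) \leq \psi(y) + \psi(z)$ for all $y, z \in X$. -/
theorem stmt_2 (X : Type*) [NormedAddCommGroup X] [NormedSpace ℝ X] [CompleteSpace X]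
    (x0 : X) (f0 : X →L[ℝ] ℝ) (hx0 : ‖x0‖ = 1) (hf0 : ‖f0‖ = 1) (hfx : f0 x0 = 1)
    (δ : ℝ) (hδ0 : 0 < δ) (hδ1 : δ < 1)
    (ψ : X → ℝ) (hψ0 : ∀ y, 0 ≤ ψ y)
    (hψeq : ∀ y, ψ y = (1 - δ) * ‖y + (ψ y - f0 y) • x0‖)
    (hψuniq : ∀ y t, 0 ≤ t → t = (1 - δ) * ‖y + (t - f0 y) • x0‖ → t = ψ y) :
    ∀ y z : X, ψ (y + z) ≤ ψ y + ψ z := by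
  have key : ∀ y t, 0 ≤ t → (1 - δ) * ‖y + (t - f0 y) • x0‖ ≤ t → ψ y ≤ t := by
    intro y t ht hle
    by_contra h
    push_neg at h
    have hnn := norm_sub_norm_le (y + (ψ y - f0 y) • x0) (y + (t - f0 y) • x0)
    have heq : (y + (ψ y - f0 y) • x0) - (y + (t - f0 y) • x0) = (ψ y - t) • x0 := by
      module
    rw [heq, norm_smul, hx0, Real.norm_eq_abs, abs_of_pos (by linarith), mul_one] at hnn
    nlinarith [hψeq y]
  intro y z
  apply key
  · exact add_nonneg (hψ0 y) (hψ0 z)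
  · have heq : y + z + (ψ y + ψ z - f0 (y + z)) • x0 =
        (y + (ψ y - f0 y) • x0) + (z + (ψ z - f0 z) • x0) := by
      rw [map_add]; module
    calc (1 - δ) * ‖y + z + (ψ y + ψ z - f0 (y + z)) • x0‖
        ≤ (1 - δ) * (‖y + (ψ y - f0 y) • x0‖ + ‖z + (ψ z - f0 z) • x0‖) := by
          rw [heq]
          exact mul_le_mul_of_nonneg_left (norm_add_le _ _) (by linarith)
      _ = ψ y + ψ z := by rw [mul_add, ← hψeq y, ← hψeq z]
end

section
/- Let $X$ be a real Banach space, $x_0 \in X$, $f_0 \in X^*$ with $\|x_0\| = \|f_0\| = 1$, $\langle f_0, x_0\rangle = 1$, $0 < \delta < 1$, and let $\psi$ be as above. Then for every $y \in X$ with $\langle f_0, y\rangle \geq (1-\delta)\|y\|$, we have $\psi(y) \leq \langle f_0, y\rangle$; and for every $y$ with $\langle f_0, y\rangle \leq (1-\delta)\|y\|$, we have $\psi(y) \geq \langle f_0, y\rangle$. -/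
theorem stmt_6 (X : Type*) [NormedAddCommGroup X] [NormedSpace ℝ X] [CompleteSpace X]
    (x0 : X) (f0 : X →L[ℝ] ℝ) (hx0 : ‖x0‖ = 1) (hf0 : ‖f0‖ = 1) (hfx : f0 x0 = 1)
    (δ : ℝ) (hδ0 : 0 < δ) (hδ1 : δ < 1)
    (ψ : X → ℝ) (hψ0 : ∀ y, 0 ≤ ψ y)
    (hψeq : ∀ y, ψ y = (1 - δ) * ‖y + (ψ y - f0 y) • x0‖)
    (hψuniq : ∀ y t, 0 ≤ t → t = (1 - δ) * ‖y + (t - f0 y) • x0‖ → t = ψ y) :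
    (∀ y : X, (1 - δ) * ‖y‖ ≤ f0 y → ψ y ≤ f0 y) ∧
    (∀ y : X, f0 y ≤ (1 - δ) * ‖y‖ → f0 y ≤ ψ y) := by
  constructor
  · intro y hy
    by_contra h
    push_neg at h
    have hv : ‖(ψ y - f0 y) • x0‖ = ψ y - f0 y := by
      rw [norm_smul, hx0, Real.norm_eq_abs, abs_of_nonneg (by linarith)]; ring
    have h1 : ‖y + (ψ y - f0 y) • x0‖ ≤ ‖y‖ + (ψ y - f0 y) := by
      calc ‖y + (ψ y - f0 y) • x0‖ ≤ ‖y‖ + ‖(ψ y - f0 y) • x0‖ := norm_add_le _ _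
        _ = ‖y‖ + (ψ y - f0 y) := by rw [hv]
    have h2 := hψeq y
    have h3 := mul_le_mul_of_nonneg_left h1 (by linarith : (0:ℝ) ≤ 1 - δ)
    nlinarith
  · intro y hy
    by_contra h
    push_neg at h
    have hv : ‖(ψ y - f0 y) • x0‖ = f0 y - ψ y := by
      rw [norm_smul, hx0, Real.norm_eq_abs, abs_of_neg (by linarith)]; ring
    have h1 : ‖y‖ - (f0 y - ψ y) ≤ ‖y + (ψ y - f0 y) • x0‖ := by
      have := norm_sub_le (y + (ψ y - f0 y) • x0) ((ψ y - f0 y) • x0)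
      simp only [add_sub_cancel_right] at this
      linarith [hv ▸ this]
    have h2 := hψeq y
    have h3 := mul_le_mul_of_nonneg_left h1 (by linarith : (0:ℝ) ≤ 1 - δ)
    nlinarith
end

section
/- Let $X$ be a real Banach space, $x_0 \in X$, $f_0 \in X^*$ with $\|x_0\| = \|f_0\| = 1$, $\langle f_0, x_0\rangle = 1$, and $0 < \delta < 1/2$. Define $|||y||| = \|y\|$ if $|\langle f_0,y\rangle| < (1-\delta)\|y\|$; $|||y||| = \frac{\psi(y)}{1-\delta} + \frac{\langle f_0,y\rangle - \psi(y)}{1-\delta/2}$ if $\langle f_0,y\rangle \geq (1-\delta)\|y\|$; and $|||y||| = |||-y|||$ if $\langle f_0,y\rangle \leq -(1-\delta)\|y\|$. Then $|||\cdot|||$ is a norm on $X$ satisfying $\|y\| \leq |||y||| \leq \frac{1}{1-\delta}\|y\|$ for all $y \in X$. -/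
set_option maxHeartbeats 1000000


theorem stmt_8 (X : Type*) [NormedAddCommGroup X] [NormedSpace ℝ X] [CompleteSpace X]
    (x0 : X) (f0 : X →L[ℝ] ℝ) (hx0 : ‖x0‖ = 1) (hf0 : ‖f0‖ = 1) (hfx : f0 x0 = 1)
    (δ : ℝ) (hδ0 : 0 < δ) (hδ1 : δ < 1/2)
    (ψ : X → ℝ) (hψ0 : ∀ y, 0 ≤ ψ y)
    (hψeq : ∀ y, ψ y = (1 - δ) * ‖y + (ψ y - f0 y) • x0‖)
    (hψuniq : ∀ y t, 0 ≤ t → t = (1 - δ) * ‖y + (t - f0 y) • x0‖ → t = ψ y)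
    (N : X → ℝ)
    (hN1 : ∀ y, |f0 y| < (1 - δ) * ‖y‖ → N y = ‖y‖)
    (hN2 : ∀ y, (1 - δ) * ‖y‖ ≤ f0 y → N y = ψ y / (1 - δ) + (f0 y - ψ y) / (1 - δ/2))
    (hN3 : ∀ y, f0 y ≤ -((1 - δ) * ‖y‖) → N y = N (-y))
    :
    (∀ y : X, N y = 0 ↔ y = 0) ∧
    (∀ (a : ℝ) (y : X), N (a • y) = |a| * N y) ∧
    (∀ y z : X, N (y + z) ≤ N y + N z) ∧
    (∀ y : X, ‖y‖ ≤ N y ∧ N y ≤ ‖y‖ / (1 - δ)) := by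
  have hδ' : (0:ℝ) < 1 - δ := by linarith
  have hδ2 : (0:ℝ) < 1 - δ/2 := by linarith
  have hfy : ∀ y : X, |f0 y| ≤ ‖y‖ := by
    intro y
    have h := f0.le_opNorm y
    rw [hf0, one_mul] at h
    simpa [Real.norm_eq_abs] using h
  have hlip : ∀ (y : X) (a b : ℝ),
      ‖y + (a - f0 y) • x0‖ ≤ ‖y + (b - f0 y) • x0‖ + |a - b| := by
    intro y a b
    have h1 : y + (a - f0 y) • x0 = (y + (b - f0 y) • x0) + (a - b) • x0 := by module
    rw [h1]
    refine (norm_add_le _ _).trans ?_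
    rw [norm_smul, Real.norm_eq_abs, hx0, mul_one]
  have comp_le : ∀ (y : X) (t0 : ℝ), (1 - δ) * ‖y + (t0 - f0 y) • x0‖ ≤ t0 → ψ y ≤ t0 := by
    intro y t0 h
    by_contra hc
    push_neg at hc
    have h2 := hlip y (ψ y) t0
    have h3 := hψeq y
    rw [abs_of_pos (by linarith : (0:ℝ) < ψ y - t0)] at h2
    nlinarith [mul_le_mul_of_nonneg_left h2 hδ'.le]
  have comp_ge : ∀ (y : X) (t0 : ℝ), t0 ≤ (1 - δ) * ‖y + (t0 - f0 y) • x0‖ → t0 ≤ ψ y := by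
    intro y t0 h
    by_contra hc
    push_neg at hc
    have h2 := hlip y t0 (ψ y)
    have h3 := hψeq y
    rw [abs_of_pos (by linarith : (0:ℝ) < t0 - ψ y)] at h2
    nlinarith [mul_le_mul_of_nonneg_left h2 hδ'.le]
  have hψsub : ∀ y z : X, ψ (y + z) ≤ ψ y + ψ z := by
    intro y z
    apply comp_le
    have hid : y + z + (ψ y + ψ z - f0 (y + z)) • x0
        = (y + (ψ y - f0 y) • x0) + (z + (ψ z - f0 z) • x0) := by
      rw [map_add]; module
    rw [hid]
    have h4 := norm_add_le (y + (ψ y - f0 y) • x0) (z + (ψ z - f0 z) • x0)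
    nlinarith [hψeq y, hψeq z, mul_le_mul_of_nonneg_left h4 hδ'.le]
  have hψhom : ∀ (a : ℝ), 0 ≤ a → ∀ y : X, ψ (a • y) = a * ψ y := by
    intro a ha y
    refine (hψuniq (a • y) (a * ψ y) (mul_nonneg ha (hψ0 y)) ?_).symm
    have hid : a • y + (a * ψ y - f0 (a • y)) • x0 = a • (y + (ψ y - f0 y) • x0) := by
      simp only [map_smul, smul_eq_mul]
      module
    rw [hid, norm_smul, Real.norm_eq_abs, abs_of_nonneg ha]
    linear_combination a * hψeq y
  have hψle : ∀ y : X, (1 - δ) * ‖y‖ ≤ f0 y → ψ y ≤ f0 y := by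
    intro y hy
    apply comp_le
    simpa using hy
  have hψge : ∀ y : X, f0 y ≤ (1 - δ) * ‖y‖ → f0 y ≤ ψ y := by
    intro y hy
    apply comp_ge
    simpa using hy
  have hdiv : ∀ y : X, ψ y / (1 - δ) = ‖y + (ψ y - f0 y) • x0‖ := by
    intro y
    rw [div_eq_iff (ne_of_gt hδ')]
    linear_combination hψeq y
  have hnle : ∀ y : X, ‖y‖ ≤ ‖y + (ψ y - f0 y) • x0‖ + |f0 y - ψ y| := by
    intro y
    have hid : y = (y + (ψ y - f0 y) • x0) + (f0 y - ψ y) • x0 := by module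
    calc ‖y‖ = ‖(y + (ψ y - f0 y) • x0) + (f0 y - ψ y) • x0‖ := by rw [← hid]
    _ ≤ ‖y + (ψ y - f0 y) • x0‖ + ‖(f0 y - ψ y) • x0‖ := norm_add_le _ _
    _ = ‖y + (ψ y - f0 y) • x0‖ + |f0 y - ψ y| := by
        rw [norm_smul, Real.norm_eq_abs, hx0, mul_one]
  have hUle : ∀ y : X, ‖y + (ψ y - f0 y) • x0‖ ≤ ‖y‖ + |f0 y - ψ y| := by
    intro y
    refine (norm_add_le _ _).trans ?_
    rw [norm_smul, Real.norm_eq_abs, hx0, mul_one, abs_sub_comm]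
  have hbdCone : ∀ y : X, (1 - δ) * ‖y‖ ≤ f0 y →
      ‖y‖ ≤ ψ y / (1 - δ) + (f0 y - ψ y) / (1 - δ/2) ∧
      ψ y / (1 - δ) + (f0 y - ψ y) / (1 - δ/2) ≤ ‖y‖ / (1 - δ) := by
    intro y hy
    have hlam : 0 ≤ f0 y - ψ y := sub_nonneg.mpr (hψle y hy)
    have hq : 0 ≤ (f0 y - ψ y) / (1 - δ/2) := div_nonneg hlam hδ2.le
    have hqe : ((f0 y - ψ y) / (1 - δ/2)) * (1 - δ/2) = f0 y - ψ y :=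
      div_mul_cancel₀ _ (ne_of_gt hδ2)
    have hre : (‖y‖ / (1 - δ)) * (1 - δ) = ‖y‖ := div_mul_cancel₀ _ (ne_of_gt hδ')
    have h1 := hnle y
    rw [abs_of_nonneg hlam] at h1
    have h2 : f0 y ≤ ‖y‖ := (le_abs_self _).trans (hfy y)
    rw [hdiv y]
    constructor
    · nlinarith [mul_nonneg hq hδ0.le]
    · nlinarith [hψeq y, mul_nonneg hq hδ0.le, norm_nonneg y]
  have htri : ∀ y : X, |f0 y| < (1 - δ) * ‖y‖ ∨ (1 - δ) * ‖y‖ ≤ f0 y ∨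
      f0 y ≤ -((1 - δ) * ‖y‖) := by
    intro y
    rcases lt_or_ge |f0 y| ((1 - δ) * ‖y‖) with h | h
    · exact Or.inl h
    · rcases le_abs.mp h with h' | h'
      · exact Or.inr (Or.inl h')
      · exact Or.inr (Or.inr (by linarith))
  have hsymm : ∀ y : X, N (-y) = N y := by
    intro y
    rcases htri y with h | h | h
    · rw [hN1 _ (by simpa using h), hN1 _ h, norm_neg]
    · rw [hN3 (-y) (by simp only [map_neg, norm_neg]; linarith), neg_neg]
    · rw [hN3 y h]
  have hbd : ∀ y : X, ‖y‖ ≤ N y ∧ N y ≤ ‖y‖ / (1 - δ) := by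
    intro y
    have hnn : (0:ℝ) ≤ ‖y‖ := norm_nonneg y
    rcases htri y with h | h | h
    · rw [hN1 y h]
      refine ⟨le_rfl, ?_⟩
      rw [le_div_iff₀ hδ']
      nlinarith
    · rw [hN2 y h]; exact hbdCone y h
    · have h' : (1 - δ) * ‖-y‖ ≤ f0 (-y) := by simp only [map_neg, norm_neg]; linarith
      rw [hN3 y h, hN2 _ h', ← norm_neg y]
      exact hbdCone _ h'
  have hMle_norm : ∀ y : X, f0 y ≤ (1 - δ) * ‖y‖ →
      ψ y / (1 - δ) + (f0 y - ψ y) / (1 - δ/2) ≤ ‖y‖ := by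
    intro y hy
    have hlam : f0 y ≤ ψ y := hψge y hy
    have h1 := hUle y
    rw [abs_of_nonpos (by linarith : f0 y - ψ y ≤ 0)] at h1
    rw [hdiv y]
    have hq : (f0 y - ψ y) / (1 - δ/2) ≤ 0 :=
      div_nonpos_of_nonpos_of_nonneg (by linarith) hδ2.le
    have hqe : ((f0 y - ψ y) / (1 - δ/2)) * (1 - δ/2) = f0 y - ψ y :=
      div_mul_cancel₀ _ (ne_of_gt hδ2)
    nlinarith [mul_nonneg (neg_nonneg.mpr hq) hδ0.le]
  have hMle : ∀ y : X, ψ y / (1 - δ) + (f0 y - ψ y) / (1 - δ/2) ≤ N y := by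
    intro y
    rcases htri y with h | h | h
    · rw [hN1 y h]
      exact hMle_norm y ((le_abs_self _).trans h.le)
    · exact le_of_eq (hN2 y h).symm
    · refine (hMle_norm y ?_).trans (hbd y).1
      nlinarith [norm_nonneg y]
  have hMsub : ∀ y z : X, ψ (y+z) / (1 - δ) + (f0 (y+z) - ψ (y+z)) / (1 - δ/2)
      ≤ (ψ y / (1-δ) + (f0 y - ψ y)/(1-δ/2)) + (ψ z/(1-δ) + (f0 z - ψ z)/(1-δ/2)) := by
    intro y z
    have hs := hψsub y z
    have hc : 1 / (1 - δ/2) ≤ 1 / (1 - δ) :=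
      one_div_le_one_div_of_le hδ' (by linarith)
    have e : ∀ t s : ℝ, t/(1-δ) + (s - t)/(1-δ/2)
        = t * (1/(1-δ) - 1/(1-δ/2)) + s * (1/(1-δ/2)) := by
      intro t s; field_simp; ring
    rw [map_add, e, e, e]
    nlinarith [mul_le_mul_of_nonneg_right hs (by linarith : (0:ℝ) ≤ 1/(1-δ) - 1/(1-δ/2))]
  have htriangle : ∀ y z : X, N (y + z) ≤ N y + N z := by
    intro y z
    rcases htri (y + z) with h | h | h
    · rw [hN1 _ h]
      calc ‖y + z‖ ≤ ‖y‖ + ‖z‖ := norm_add_le y z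
      _ ≤ N y + N z := add_le_add (hbd y).1 (hbd z).1
    · rw [hN2 _ h]
      exact (hMsub y z).trans (add_le_add (hMle y) (hMle z))
    · rw [hN3 _ h]
      have h' : (1 - δ) * ‖-(y+z)‖ ≤ f0 (-(y+z)) := by
        simp only [map_neg, norm_neg]; linarith
      rw [hN2 _ h']
      have hneg : -(y+z) = (-y) + (-z) := by abel
      rw [hneg]
      refine (hMsub (-y) (-z)).trans ?_
      rw [← hsymm y, ← hsymm z]
      exact add_le_add (hMle (-y)) (hMle (-z))
  have hψ0' : ψ 0 = 0 := (hψuniq 0 0 le_rfl (by simp)).symm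
  have hN0 : N 0 = 0 := by
    rw [hN2 0 (by simp)]
    simp [hψ0']
  have hpos : ∀ (a : ℝ), 0 < a → ∀ y : X, N (a • y) = a * N y := by
    intro a ha y
    have hna : ‖a • y‖ = a * ‖y‖ := by
      rw [norm_smul, Real.norm_eq_abs, abs_of_pos ha]
    have hfa : f0 (a • y) = a * f0 y := by rw [map_smul, smul_eq_mul]
    rcases htri y with h | h | h
    · rw [hN1 y h, hN1 (a • y) (by
        rw [hfa, hna, abs_mul, abs_of_pos ha]
        nlinarith [mul_lt_mul_of_pos_left h ha]), hna]
    · have h' : (1 - δ) * ‖a • y‖ ≤ f0 (a • y) := by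
        rw [hfa, hna]; nlinarith
      rw [hN2 _ h', hN2 y h, hψhom a ha.le y, hfa]
      ring
    · have h' : f0 (a • y) ≤ -((1 - δ) * ‖a • y‖) := by
        rw [hfa, hna]; nlinarith
      rw [hN3 _ h', hN3 y h]
      have hs : -(a • y) = a • (-y) := by module
      rw [hs]
      have h'' : (1 - δ) * ‖-y‖ ≤ f0 (-y) := by simp only [map_neg, norm_neg]; linarith
      have hna' : ‖a • (-y)‖ = a * ‖-y‖ := by
        rw [norm_smul, Real.norm_eq_abs, abs_of_pos ha]
      have hfa' : f0 (a • (-y)) = a * f0 (-y) := by rw [map_smul, smul_eq_mul]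
      have h''' : (1 - δ) * ‖a • (-y)‖ ≤ f0 (a • (-y)) := by
        rw [hfa', hna']; nlinarith
      rw [hN2 _ h''', hN2 _ h'', hψhom a ha.le (-y), hfa']
      ring
  have hhomN : ∀ (a : ℝ) (y : X), N (a • y) = |a| * N y := by
    intro a y
    rcases lt_trichotomy a 0 with h | h | h
    · have hs : a • y = (-a) • (-y) := by module
      rw [hs, hpos (-a) (by linarith) (-y), hsymm y, abs_of_neg h]
    · subst h; rw [zero_smul, abs_zero, zero_mul, hN0]
    · rw [hpos a h y, abs_of_pos h]
  refine ⟨?_, hhomN, htriangle, hbd⟩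
  intro y
  constructor
  · intro h
    have h1 := (hbd y).1
    have h2 : ‖y‖ = 0 := le_antisymm (by linarith) (norm_nonneg y)
    exact norm_eq_zero.mp h2
  · rintro rfl; exact hN0
end

section
/- Let $X$ be a real Banach space, $x_0 \in X$, $f_0 \in X^*$ with $\|x_0\| = \|f_0\| = 1$, $\langle f_0, x_0\rangle = 1$, and $0 < \delta < 1/2$, and let $|||\cdot|||$ be the norm $|||\cdot|||_{(x_0,f_0),\delta}$ defined above. Then the closed unit ball of $|||\cdot|||$ equals the closed convex hull of $(B_{\|\cdot\|} \setminus C(f_0,1-\delta)) \cup \{(1-\delta/2)x_0, -(1-\delta/2)x_0\}$, where $B_{\|\cdot\|}$ is the closed unit ball of $\|\cdot\|$ and $C(f_0,1-\delta) = \{y : |\langle f_0,y\rangle| \geq (1-\delta)\|y\|\}$. -/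
/-!
Write `r = 1 - δ`, `ρ = 1 - δ/2` and `T` for the closed convex hull. Off the double cone
`C(f0, r)` both sides agree with the unit ball. On the cone `f0 y ≥ r ‖y‖`, the vector
`z = y + (ψ y - f0 y) x0` satisfies `f0 z = r ‖z‖`, and `y = z + t ρ x0` with
`t = (f0 y - ψ y) / ρ ≥ 0` and `|||y||| = ‖z‖ + t`. If `‖z‖ + t ≤ 1`, then `y` is a convex
combination of `0`, `ρ x0` and `z / ‖z‖`, and the latter is a limit of points of the ball lying
just outside the cone. Conversely, if `g` norms `z`, a combination `α g + β f0` with `α, β ≥ 0`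
is at most `1` on the generating set and equals `‖z‖ + t` at `y`. The opposite cone follows by
symmetry.
-/

open Metric Filter Topology

section Convex

variable {E : Type*} [AddCommGroup E] [Module ℝ E]

theorem Convex.add_smul_smul_mem_of_zero_mem {s : Set E} (hs : Convex ℝ s) (h0 : (0 : E) ∈ s)
    {u v : E} (hu : u ∈ s) (hv : v ∈ s) {a b : ℝ} (ha : 0 ≤ a) (hb : 0 ≤ b) (hab : a + b ≤ 1) :
    a • u + b • v ∈ s := by
  rcases (add_nonneg ha hb).eq_or_lt with hab0 | hab0
  · obtain ⟨rfl, rfl⟩ : a = 0 ∧ b = 0 := ⟨by linarith, by linarith⟩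
    simpa using h0
  have hw : (a / (a + b)) • u + (b / (a + b)) • v ∈ s :=
    hs hu hv (by positivity) (by positivity) (by field_simp)
  convert hs.smul_mem_of_zero_mem h0 hw ⟨hab0.le, hab⟩ using 1
  rw [smul_add, smul_smul, smul_smul, mul_div_cancel₀ _ hab0.ne', mul_div_cancel₀ _ hab0.ne']

end Convex

-- The coefficients of the supporting functional `α g + β f`, where `c = g x0`.
theorem exists_nonneg_coeffs {r ρ c : ℝ} (hr0 : 0 < r) (hr1 : r < 1) (hrρ : r ≤ ρ) (hρ1 : ρ ≤ 1)
    (hc : c ≤ 1) : ∃ α β : ℝ, 0 ≤ α ∧ 0 ≤ β ∧ α + β * r = 1 ∧ ρ * (α * c + β) = 1 := by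
  have hρ0 : 0 < ρ := hr0.trans_le hrρ
  have hD : 0 < 1 - c * r := by nlinarith
  have hρinv : 1 ≤ ρ⁻¹ := one_le_inv₀ hρ0 |>.mpr hρ1
  have hrρinv : r * ρ⁻¹ ≤ 1 := by rw [← div_eq_mul_inv, div_le_one hρ0]; exact hrρ
  set β := (ρ⁻¹ - c) / (1 - c * r) with hβ
  refine ⟨1 - β * r, β, ?_, div_nonneg (by linarith) hD.le, by ring, ?_⟩
  · rw [sub_nonneg, hβ, div_mul_eq_mul_div, div_le_one hD]
    nlinarith
  · rw [hβ]; field_simp; ring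

section NormedSpace

variable {X : Type*} [NormedAddCommGroup X] [NormedSpace ℝ X]

theorem neg_closure_convexHull_of_neg_eq {s : Set X} (hs : -s = s) :
    -closure (convexHull ℝ s) = closure (convexHull ℝ s) := by
  rw [neg_closure, ← convexHull_neg, hs]

theorem le_of_mem_closure_convexHull {s : Set X} {F : X →L[ℝ] ℝ} {c : ℝ}
    (hF : ∀ w ∈ s, F w ≤ c) {y : X} (hy : y ∈ closure (convexHull ℝ s)) : F y ≤ c :=
  closure_minimal (convexHull_min hF (convex_halfSpace_le F.isLinear c))
    (isClosed_le F.continuous continuous_const) hy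

end NormedSpace

section ConeCutBall

variable {X : Type*} [NormedAddCommGroup X] [NormedSpace ℝ X]
  {f : X →L[ℝ] ℝ} {x0 : X} {r ρ : ℝ}

theorem le_of_eq_mul_norm_add_smul {y : X} {p : ℝ} (hx0 : ‖x0‖ ≤ 1) (hr0 : 0 ≤ r) (hr1 : r < 1)
    (hy : r * ‖y‖ ≤ f y) (hp : p = r * ‖y + (p - f y) • x0‖) : p ≤ f y := by
  by_contra! hlt
  have hnorm : ‖y + (p - f y) • x0‖ ≤ ‖y‖ + (p - f y) := by
    refine (norm_add_le _ _).trans (add_le_add_right ?_ _)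
    rw [norm_smul, Real.norm_of_nonneg (by linarith)]
    nlinarith
  nlinarith [mul_le_mul_of_nonneg_left hnorm hr0]

variable (f x0 r ρ) in
def coneCutBall : Set X :=
  (closedBall (0 : X) 1 \ {y : X | r * ‖y‖ ≤ |f y|}) ∪ {ρ • x0, -(ρ • x0)}

theorem neg_coneCutBall : -coneCutBall f x0 r ρ = coneCutBall f x0 r ρ := by
  ext w
  simp only [coneCutBall, Set.mem_neg, Set.mem_union, Set.mem_sdiff, Set.mem_insert_iff,
    Set.mem_singleton_iff, mem_closedBall_zero_iff, Set.mem_ofPred_eq, norm_neg, map_neg, abs_neg,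
    neg_eq_iff_eq_neg, neg_neg]
  tauto

theorem coneCutBall_subset_closedBall (hx0 : ‖x0‖ ≤ 1) (hρ0 : 0 ≤ ρ) (hρ1 : ρ ≤ 1) :
    coneCutBall f x0 r ρ ⊆ closedBall 0 1 := by
  have hρx0 : ‖ρ • x0‖ ≤ 1 := by
    rw [norm_smul, Real.norm_of_nonneg hρ0]
    nlinarith [norm_nonneg x0]
  rintro w (⟨hw, -⟩ | rfl | rfl)
  · exact hw
  · simpa using hρx0
  · simpa using hρx0

theorem closure_convexHull_coneCutBall_subset_closedBall (hx0 : ‖x0‖ ≤ 1) (hρ0 : 0 ≤ ρ)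
    (hρ1 : ρ ≤ 1) : closure (convexHull ℝ (coneCutBall f x0 r ρ)) ⊆ closedBall 0 1 :=
  closure_minimal (convexHull_min (coneCutBall_subset_closedBall hx0 hρ0 hρ1)
    (convex_closedBall 0 1)) isClosed_closedBall

theorem mem_closure_closedBall_diff_cone (hx0 : ‖x0‖ ≤ 1) (hfx : f x0 = 1) (hr0 : 0 < r)
    (hr1 : r < 1) {u : X} (hu : ‖u‖ = 1) (hfu : f u = r) :
    u ∈ closure (closedBall (0 : X) 1 \ {y : X | r * ‖y‖ ≤ |f y|}) := by
  have hlim : Tendsto (fun η : ℝ => u - η • (u + x0)) (𝓝[>] 0) (𝓝 u) := by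
    have hcont : Continuous (fun η : ℝ => u - η • (u + x0)) := by fun_prop
    exact (hcont.tendsto' 0 u (by simp)).mono_left nhdsWithin_le_nhds
  refine mem_closure_of_tendsto hlim ?_
  filter_upwards [Ioo_mem_nhdsGT (half_pos hr0)] with η ⟨hη0, hηr⟩
  have hsplit : u - η • (u + x0) = (1 - η) • u - η • x0 := by
    rw [smul_add, sub_smul, one_smul]; abel
  have hηx0 : ‖η • x0‖ ≤ η := by
    rw [norm_smul, Real.norm_of_nonneg hη0.le]; nlinarith [norm_nonneg x0]
  have hηu : ‖(1 - η) • u‖ = 1 - η := by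
    rw [norm_smul, hu, mul_one, Real.norm_of_nonneg (by linarith)]
  have hupper : ‖u - η • (u + x0)‖ ≤ 1 := by
    rw [hsplit]; linarith [norm_sub_le ((1 - η) • u) (η • x0)]
  have hlower : 1 - 2 * η ≤ ‖u - η • (u + x0)‖ := by
    rw [hsplit]; linarith [norm_sub_norm_le ((1 - η) • u) (η • x0)]
  have hf : f (u - η • (u + x0)) = (1 - η) * r - η := by
    simp only [map_sub, map_smul, map_add, hfu, hfx, smul_eq_mul]; ring
  refine ⟨mem_closedBall_zero_iff.mpr hupper, fun hmem => ?_⟩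
  rw [Set.mem_ofPred_eq, hf] at hmem
  rcases le_abs'.mp hmem with h | h <;> nlinarith

theorem add_smul_mem_closure_convexHull_coneCutBall (hx0 : ‖x0‖ ≤ 1) (hfx : f x0 = 1)
    (hr0 : 0 < r) (hr1 : r < 1) {z : X} (hz : f z = r * ‖z‖) {t : ℝ} (ht : 0 ≤ t)
    (hzt : ‖z‖ + t ≤ 1) : z + t • (ρ • x0) ∈ closure (convexHull ℝ (coneCutBall f x0 r ρ)) := by
  set T := closure (convexHull ℝ (coneCutBall f x0 r ρ))
  have hT : Convex ℝ T := (convex_convexHull ℝ _).closure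
  have hsub : coneCutBall f x0 r ρ ⊆ T := (subset_convexHull ℝ _).trans subset_closure
  have hpos : ρ • x0 ∈ T := hsub (by simp [coneCutBall])
  have hneg : -(ρ • x0) ∈ T := hsub (by simp [coneCutBall])
  have h0 : (0 : X) ∈ T := by
    simpa using hT.midpoint_mem hpos hneg
  obtain ⟨u, huT, hzu⟩ : ∃ u ∈ T, ‖z‖ • u = z := by
    rcases eq_or_ne z 0 with rfl | hz0
    · exact ⟨_, hpos, by simp⟩
    have hnz : 0 < ‖z‖ := norm_pos_iff.mpr hz0
    refine ⟨‖z‖⁻¹ • z, closure_mono (subset_convexHull ℝ _) ?_, by simp [smul_smul, hnz.ne']⟩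
    refine closure_mono Set.subset_union_left
      (mem_closure_closedBall_diff_cone hx0 hfx hr0 hr1 ?_ ?_)
    · simp [norm_smul, hnz.ne']
    · rw [map_smul, smul_eq_mul, hz]; field_simp
  rw [← hzu]
  exact hT.add_smul_smul_mem_of_zero_mem h0 huT hpos (norm_nonneg z) ht hzt

theorem norm_add_le_one_of_add_smul_mem_closure_convexHull_coneCutBall (hx0 : ‖x0‖ ≤ 1)
    (hfx : f x0 = 1) (hr0 : 0 < r) (hr1 : r < 1) (hrρ : r ≤ ρ) (hρ1 : ρ ≤ 1) {z : X}
    (hz : f z = r * ‖z‖) {t : ℝ}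
    (hzt : z + t • (ρ • x0) ∈ closure (convexHull ℝ (coneCutBall f x0 r ρ))) : ‖z‖ + t ≤ 1 := by
  obtain ⟨g, hg, hgz⟩ := exists_dual_vector'' ℝ z
  have hgx0 : g x0 ≤ 1 :=
    (le_abs_self _).trans <| (g.le_opNorm x0).trans <| mul_le_one₀ hg (norm_nonneg _) hx0
  obtain ⟨α, β, hα, hβ, hαβ, hαβρ⟩ := exists_nonneg_coeffs hr0 hr1 hrρ hρ1 hgx0
  have hF : ∀ w ∈ coneCutBall f x0 r ρ, (α • g + β • f) w ≤ 1 := by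
    have hpole : (α • g + β • f) (ρ • x0) = 1 := by
      simp only [add_apply, FunLike.coe_smul, Pi.smul_apply, map_smul, hfx, smul_eq_mul]
      linear_combination hαβρ
    rintro w (⟨hw, hwC⟩ | rfl | rfl)
    · have hgw : g w ≤ ‖w‖ :=
        (le_abs_self _).trans <| (g.le_opNorm w).trans <| mul_le_of_le_one_left (norm_nonneg _) hg
      have hfw : f w ≤ r * ‖w‖ := (le_abs_self _).trans (not_le.mp hwC).le
      rw [mem_closedBall_zero_iff] at hw
      simp only [add_apply, FunLike.coe_smul, Pi.smul_apply, smul_eq_mul]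
      nlinarith
    · exact hpole.le
    · rw [map_neg, hpole]; norm_num
  have hFy : (α • g + β • f) (z + t • (ρ • x0)) = ‖z‖ + t := by
    simp only [add_apply, FunLike.coe_smul, Pi.smul_apply, map_add, map_smul, hfx, hz, hgz,
      smul_eq_mul, RCLike.ofReal_real_eq_id, id]
    linear_combination ‖z‖ * hαβ + t * hαβρ
  exact hFy ▸ le_of_mem_closure_convexHull hF hzt

theorem mem_closure_convexHull_coneCutBall_iff_of_abs_lt (hx0 : ‖x0‖ ≤ 1) (hρ0 : 0 ≤ ρ)
    (hρ1 : ρ ≤ 1) {y : X} (hy : |f y| < r * ‖y‖) :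
    y ∈ closure (convexHull ℝ (coneCutBall f x0 r ρ)) ↔ ‖y‖ ≤ 1 := by
  rw [← mem_closedBall_zero_iff]
  exact ⟨fun h => closure_convexHull_coneCutBall_subset_closedBall hx0 hρ0 hρ1 h,
    fun h => subset_closure (subset_convexHull ℝ _ (Or.inl ⟨h, hy.not_ge⟩))⟩

theorem mem_closure_convexHull_coneCutBall_iff_of_le (hx0 : ‖x0‖ ≤ 1) (hfx : f x0 = 1)
    (hr0 : 0 < r) (hr1 : r < 1) (hrρ : r ≤ ρ) (hρ1 : ρ ≤ 1) {y : X} (hy : r * ‖y‖ ≤ f y)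
    {p : ℝ} (hp : p = r * ‖y + (p - f y) • x0‖) :
    y ∈ closure (convexHull ℝ (coneCutBall f x0 r ρ)) ↔ p / r + (f y - p) / ρ ≤ 1 := by
  have hρ0 : 0 < ρ := hr0.trans_le hrρ
  set z := y + (p - f y) • x0
  set t := (f y - p) / ρ
  have hfz : f z = r * ‖z‖ := by
    simp only [z, map_add, map_smul, hfx, smul_eq_mul]
    linarith
  have hyz : y = z + t • (ρ • x0) := by
    rw [smul_smul, div_mul_cancel₀ _ hρ0.ne', add_assoc, ← add_smul]
    simp
  have hpz : p / r = ‖z‖ := by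
    rw [div_eq_iff hr0.ne', mul_comm]; exact hp
  rw [hpz, hyz]
  exact ⟨norm_add_le_one_of_add_smul_mem_closure_convexHull_coneCutBall hx0 hfx hr0 hr1 hrρ hρ1
      hfz,
    add_smul_mem_closure_convexHull_coneCutBall hx0 hfx hr0 hr1 hfz
      (div_nonneg (sub_nonneg.2 (le_of_eq_mul_norm_add_smul hx0 hr0.le hr1 hy hp)) hρ0.le)⟩

end ConeCutBall

theorem stmt_9_general (X : Type*) [NormedAddCommGroup X] [NormedSpace ℝ X]
    (x0 : X) (f0 : X →L[ℝ] ℝ) (hx0 : ‖x0‖ = 1) (hfx : f0 x0 = 1)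
    (δ : ℝ) (hδ0 : 0 < δ) (hδ1 : δ < 1/2)
    (ψ : X → ℝ)
    (hψeq : ∀ y, ψ y = (1 - δ) * ‖y + (ψ y - f0 y) • x0‖)
    (N : X → ℝ)
    (hN1 : ∀ y, |f0 y| < (1 - δ) * ‖y‖ → N y = ‖y‖)
    (hN2 : ∀ y, (1 - δ) * ‖y‖ ≤ f0 y → N y = ψ y / (1 - δ) + (f0 y - ψ y) / (1 - δ/2))
    (hN3 : ∀ y, f0 y ≤ -((1 - δ) * ‖y‖) → N y = N (-y))
    :
    {x : X | N x ≤ 1} =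
      closure (convexHull ℝ
        ((Metric.closedBall (0 : X) 1 \ {y : X | (1 - δ) * ‖y‖ ≤ |f0 y|}) ∪
          {(1 - δ/2) • x0, -((1 - δ/2) • x0)})) := by
  have hr0 : 0 < 1 - δ := by linarith
  have hr1 : 1 - δ < 1 := by linarith
  have hrρ : 1 - δ ≤ 1 - δ / 2 := by linarith
  have hρ1 : 1 - δ / 2 ≤ 1 := by linarith
  change _ = closure (convexHull ℝ (coneCutBall f0 x0 (1 - δ) (1 - δ / 2)))
  ext y
  rw [Set.mem_ofPred_eq]
  rcases lt_or_ge |f0 y| ((1 - δ) * ‖y‖) with hC | hC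
  · rw [hN1 y hC, mem_closure_convexHull_coneCutBall_iff_of_abs_lt hx0.le (by linarith) hρ1 hC]
  rcases le_abs'.mp hC with hneg | hpos
  · have hneg' : (1 - δ) * ‖-y‖ ≤ f0 (-y) := by simpa using le_neg_of_le_neg hneg
    rw [hN3 y hneg, hN2 (-y) hneg', ← Set.neg_mem_neg,
      neg_closure_convexHull_of_neg_eq neg_coneCutBall,
      mem_closure_convexHull_coneCutBall_iff_of_le hx0.le hfx hr0 hr1 hrρ hρ1 hneg' (hψeq (-y))]
  · rw [hN2 y hpos,
      mem_closure_convexHull_coneCutBall_iff_of_le hx0.le hfx hr0 hr1 hrρ hρ1 hpos (hψeq y)]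

theorem stmt_9 (X : Type*) [NormedAddCommGroup X] [NormedSpace ℝ X] [CompleteSpace X]
    (x0 : X) (f0 : X →L[ℝ] ℝ) (hx0 : ‖x0‖ = 1) (hf0 : ‖f0‖ = 1) (hfx : f0 x0 = 1)
    (δ : ℝ) (hδ0 : 0 < δ) (hδ1 : δ < 1/2)
    (ψ : X → ℝ) (hψ0 : ∀ y, 0 ≤ ψ y)
    (hψeq : ∀ y, ψ y = (1 - δ) * ‖y + (ψ y - f0 y) • x0‖)
    (hψuniq : ∀ y t, 0 ≤ t → t = (1 - δ) * ‖y + (t - f0 y) • x0‖ → t = ψ y)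
    (N : X → ℝ)
    (hN1 : ∀ y, |f0 y| < (1 - δ) * ‖y‖ → N y = ‖y‖)
    (hN2 : ∀ y, (1 - δ) * ‖y‖ ≤ f0 y → N y = ψ y / (1 - δ) + (f0 y - ψ y) / (1 - δ/2))
    (hN3 : ∀ y, f0 y ≤ -((1 - δ) * ‖y‖) → N y = N (-y))
    :
    {x : X | N x ≤ 1} =
      closure (convexHull ℝ
        ((Metric.closedBall (0 : X) 1 \ {y : X | (1 - δ) * ‖y‖ ≤ |f0 y|}) ∪
          {(1 - δ/2) • x0, -((1 - δ/2) • x0)})) :=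
  stmt_9_general X x0 f0 hx0 hfx δ hδ0 hδ1 ψ hψeq N hN1 hN2 hN3
end

section
/- Let $X$ be a real Banach space, $x_0 \in X$, $f_0 \in X^*$ with $\|x_0\| = \|f_0\| = 1$, $\langle f_0, x_0\rangle = 1$, $0 < \delta < 1/2$, and let $|||\cdot||| = |||\cdot|||_{(x_0,f_0),\delta}$. Then for all $h \in X$ with $\|h\| = 1$ and all $0 < t < \frac{\delta(1-\delta/2)}{(1-\delta)+|\langle f_0,h\rangle|}$: $$\frac{|||(1-\delta/2)x_0 + th||| - |||(1-\delta/2)x_0|||}{t} \geq \frac{\delta - (4-\delta)|\langle f_0,h\rangle|}{2(1-\delta/2)(2-\delta)}.$$ -/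
/-!
For `t` in the given range the point `y₀ + t h`, `y₀ = (1 - δ/2) x₀`, stays in the cone
`C⁺(f₀, 1 - δ)`, where `|||·|||` is affine in `ψ` and `f₀`; since `ψ y₀ = 0`, the difference
quotient is `(δ s / (2 (1 - δ)) + t ⟨f₀, h⟩) / ((1 - δ/2) t)` with `s = ψ (y₀ + t h)`.
The equation defining `ψ` and the reverse triangle inequality give
`(2 - δ) s ≥ (1 - δ) (1 - |⟨f₀, h⟩|) t`, and substituting this gives the bound.
-/

lemma eq_zero_of_eq_mul_abs {κ s : ℝ} (hκ0 : 0 ≤ κ) (hκ1 : κ < 1) (hs : s = κ * |s|) :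
    s = 0 := by
  have hs0 : 0 ≤ s := hs ▸ by positivity
  rw [abs_of_nonneg hs0] at hs
  nlinarith

section

variable {E : Type*} [SeminormedAddCommGroup E] [NormedSpace ℝ E]

lemma mul_one_sub_abs_mul_le_of_eq_mul_norm {x h : E} (hx : ‖x‖ = 1) (hh : ‖h‖ = 1)
    {κ t a s : ℝ} (hκ : 0 ≤ κ) (ht : 0 ≤ t) (hs : s = κ * ‖t • h + (s - t * a) • x‖) :
    κ * (1 - |a|) * t ≤ (1 + κ) * s := by
  have hs0 : 0 ≤ s := hs ▸ by positivity
  have hnorm : t - (s + t * |a|) ≤ ‖t • h + (s - t * a) • x‖ :=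
    calc t - (s + t * |a|) ≤ ‖t • h‖ - ‖(s - t * a) • x‖ := by
          rw [norm_smul, norm_smul, hh, hx, mul_one, mul_one, Real.norm_of_nonneg ht,
            Real.norm_eq_abs]
          have := abs_sub s (t * a)
          rw [abs_of_nonneg hs0, abs_mul, abs_of_nonneg ht] at this
          linarith
      _ ≤ ‖t • h + (s - t * a) • x‖ := norm_sub_le_norm_add _ _
  nlinarith [mul_le_mul_of_nonneg_left hnorm hκ]

lemma mul_norm_smul_add_le_of_mul_le {f : E →L[ℝ] ℝ} {x h : E} (hx : ‖x‖ = 1) (hh : ‖h‖ = 1)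
    (hfx : f x = 1) {κ c t : ℝ} (hκ : 0 ≤ κ) (hc : 0 ≤ c) (ht : 0 ≤ t)
    (hsmall : t * (κ + |f h|) ≤ (1 - κ) * c) :
    κ * ‖c • x + t • h‖ ≤ f (c • x + t • h) := by
  have hnorm : ‖c • x + t • h‖ ≤ c + t := by
    calc ‖c • x + t • h‖ ≤ ‖c • x‖ + ‖t • h‖ := norm_add_le _ _
      _ = c + t := by rw [norm_smul, norm_smul, hx, hh, Real.norm_of_nonneg hc,
          Real.norm_of_nonneg ht, mul_one, mul_one]
  rw [map_add, map_smul, map_smul, hfx, smul_eq_mul, smul_eq_mul, mul_one]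
  nlinarith [mul_le_mul_of_nonneg_left hnorm hκ, neg_abs_le (f h)]

end

lemma le_div_of_mul_one_sub_abs_le {δ t a s : ℝ} (hδ0 : 0 < δ) (hδ1 : δ < 1) (ht : 0 < t)
    (hs : (1 - δ) * (1 - |a|) * t ≤ (2 - δ) * s) :
    (δ - (4 - δ) * |a|) / (2 * (1 - δ / 2) * (2 - δ)) ≤
      (s / (1 - δ) + (1 - δ / 2 + t * a - s) / (1 - δ / 2) - 1) / t := by
  have h1 : 0 < 1 - δ := by linarith
  have h2 : 0 < 2 - δ := by linarith
  have hexpand : s / (1 - δ) + (1 - δ / 2 + t * a - s) / (1 - δ / 2) - 1 =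
      (s * δ + 2 * (1 - δ) * t * a) / ((1 - δ) * (2 - δ)) := by
    field_simp
    ring
  have ha : 0 ≤ a + |a| := by linarith [neg_abs_le a]
  have hcross :
      (δ - (4 - δ) * |a|) * ((1 - δ) * t) ≤ (s * δ + 2 * (1 - δ) * t * a) * (2 - δ) := by
    nlinarith [mul_le_mul_of_nonneg_left hs hδ0.le,
      mul_nonneg ha (by positivity : 0 ≤ (1 - δ) * t * (2 - δ))]
  rw [hexpand, div_div, div_le_div_iff₀ (by nlinarith) (by positivity)]
  nlinarith [mul_le_mul_of_nonneg_left hcross h2.le]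

theorem stmt_10_general (X : Type*) [NormedAddCommGroup X] [NormedSpace ℝ X]
    (x0 : X) (f0 : X →L[ℝ] ℝ) (hx0 : ‖x0‖ = 1) (hfx : f0 x0 = 1)
    (δ : ℝ) (hδ0 : 0 < δ) (hδ1 : δ < 1/2)
    (ψ : X → ℝ)
    (hψeq : ∀ y, ψ y = (1 - δ) * ‖y + (ψ y - f0 y) • x0‖)
    (N : X → ℝ)
    (hN2 : ∀ y, (1 - δ) * ‖y‖ ≤ f0 y → N y = ψ y / (1 - δ) + (f0 y - ψ y) / (1 - δ/2))
    :
    ∀ h : X, ‖h‖ = 1 → ∀ t : ℝ, 0 < t → t < δ * (1 - δ/2) / ((1 - δ) + |f0 h|) →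
      (δ - (4 - δ) * |f0 h|) / (2 * (1 - δ/2) * (2 - δ)) ≤
        (N ((1 - δ/2) • x0 + t • h) - N ((1 - δ/2) • x0)) / t := by
  intro h hh t ht htlt
  have hκ : 0 < 1 - δ := by linarith
  have hc : 0 ≤ 1 - δ / 2 := by linarith
  have hcone (t : ℝ) (ht : 0 ≤ t) (hsmall : t * ((1 - δ) + |f0 h|) ≤ δ * (1 - δ / 2)) :
      (1 - δ) * ‖(1 - δ / 2) • x0 + t • h‖ ≤ f0 ((1 - δ / 2) • x0 + t • h) :=
    mul_norm_smul_add_le_of_mul_le hx0 hh hfx hκ.le hc ht (by rwa [sub_sub_cancel])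
  have hf (t : ℝ) : f0 ((1 - δ / 2) • x0 + t • h) = 1 - δ / 2 + t * f0 h := by
    simp [hfx]
  have hψ0 : ψ ((1 - δ / 2) • x0) = 0 := by
    refine eq_zero_of_eq_mul_abs hκ.le (by linarith) ?_
    have := hψeq ((1 - δ / 2) • x0)
    rwa [map_smul, hfx, smul_eq_mul, mul_one, ← add_smul, add_sub_cancel, norm_smul, hx0,
      mul_one, Real.norm_eq_abs] at this
  have hN0 : N ((1 - δ / 2) • x0) = 1 := by
    have := hcone 0 le_rfl (by rw [zero_mul]; positivity)
    rw [zero_smul, add_zero] at this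
    rw [hN2 _ this, hψ0, map_smul, hfx, smul_eq_mul, mul_one, zero_div, zero_add, sub_zero,
      div_self (by linarith)]
  have hψt : (1 - δ) * (1 - |f0 h|) * t ≤ (2 - δ) * ψ ((1 - δ / 2) • x0 + t • h) := by
    set s := ψ ((1 - δ / 2) • x0 + t • h)
    have hvec : (1 - δ / 2) • x0 + t • h + (s - (1 - δ / 2 + t * f0 h)) • x0 =
        t • h + (s - t * f0 h) • x0 := by
      module
    have hs := hψeq ((1 - δ / 2) • x0 + t • h)
    rw [hf, hvec] at hs
    have := mul_one_sub_abs_mul_le_of_eq_mul_norm hx0 hh hκ.le ht.le hs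
    linarith
  have hsmall : t * ((1 - δ) + |f0 h|) ≤ δ * (1 - δ / 2) :=
    ((lt_div_iff₀ (by positivity)).mp htlt).le
  rw [hN2 _ (hcone t ht.le hsmall), hf, hN0]
  exact le_div_of_mul_one_sub_abs_le hδ0 (by linarith) ht hψt

theorem stmt_10 (X : Type*) [NormedAddCommGroup X] [NormedSpace ℝ X] [CompleteSpace X]
    (x0 : X) (f0 : X →L[ℝ] ℝ) (hx0 : ‖x0‖ = 1) (hf0 : ‖f0‖ = 1) (hfx : f0 x0 = 1)
    (δ : ℝ) (hδ0 : 0 < δ) (hδ1 : δ < 1/2)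
    (ψ : X → ℝ) (hψ0 : ∀ y, 0 ≤ ψ y)
    (hψeq : ∀ y, ψ y = (1 - δ) * ‖y + (ψ y - f0 y) • x0‖)
    (hψuniq : ∀ y t, 0 ≤ t → t = (1 - δ) * ‖y + (t - f0 y) • x0‖ → t = ψ y)
    (N : X → ℝ)
    (hN1 : ∀ y, |f0 y| < (1 - δ) * ‖y‖ → N y = ‖y‖)
    (hN2 : ∀ y, (1 - δ) * ‖y‖ ≤ f0 y → N y = ψ y / (1 - δ) + (f0 y - ψ y) / (1 - δ/2))
    (hN3 : ∀ y, f0 y ≤ -((1 - δ) * ‖y‖) → N y = N (-y))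
    :
    ∀ h : X, ‖h‖ = 1 → ∀ t : ℝ, 0 < t → t < δ * (1 - δ/2) / ((1 - δ) + |f0 h|) →
      (δ - (4 - δ) * |f0 h|) / (2 * (1 - δ/2) * (2 - δ)) ≤
        (N ((1 - δ/2) • x0 + t • h) - N ((1 - δ/2) • x0)) / t :=
  stmt_10_general X x0 f0 hx0 hfx δ hδ0 hδ1 ψ hψeq N hN2
end

section
/- Let $X$ be a real Banach space, $x_0 \in X$, $f_0 \in X^*$ with $\|x_0\| = \|f_0\| = 1$, $\langle f_0, x_0\rangle = 1$, $0 < \delta < 1/2$, and let $|||\cdot||| = |||\cdot|||_{(x_0,f_0),\delta}$. Then for every $x \in X$ with $|\langle f_0, x\rangle| \geq (1-\delta/4)\|x\|$, we have $\|x\| \leq \frac{4-2\delta}{4-\delta}|||x|||$. -/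
theorem stmt_12 (X : Type*) [NormedAddCommGroup X] [NormedSpace ℝ X] [CompleteSpace X]
    (x0 : X) (f0 : X →L[ℝ] ℝ) (hx0 : ‖x0‖ = 1) (hf0 : ‖f0‖ = 1) (hfx : f0 x0 = 1)
    (δ : ℝ) (hδ0 : 0 < δ) (hδ1 : δ < 1/2)
    (ψ : X → ℝ) (hψ0 : ∀ y, 0 ≤ ψ y)
    (hψeq : ∀ y, ψ y = (1 - δ) * ‖y + (ψ y - f0 y) • x0‖)
    (hψuniq : ∀ y t, 0 ≤ t → t = (1 - δ) * ‖y + (t - f0 y) • x0‖ → t = ψ y)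
    (N : X → ℝ)
    (hN1 : ∀ y, |f0 y| < (1 - δ) * ‖y‖ → N y = ‖y‖)
    (hN2 : ∀ y, (1 - δ) * ‖y‖ ≤ f0 y → N y = ψ y / (1 - δ) + (f0 y - ψ y) / (1 - δ/2))
    (hN3 : ∀ y, f0 y ≤ -((1 - δ) * ‖y‖) → N y = N (-y))
    :
    ∀ x : X, (1 - δ/4) * ‖x‖ ≤ |f0 x| → ‖x‖ ≤ (4 - 2*δ) / (4 - δ) * N x := by
  have hd1 : (0:ℝ) < 1 - δ := by linarith
  have hd2 : (0:ℝ) < 1 - δ/2 := by linarith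
  have hd4 : (0:ℝ) < 4 - δ := by linarith
  have key : ∀ y : X, (1 - δ) * ‖y‖ ≤ f0 y → (1 - δ/4) * ‖y‖ ≤ |f0 y| →
      ‖y‖ ≤ (4 - 2*δ) / (4 - δ) * N y := by
    intro y h1 h2
    have hf0y : 0 ≤ f0 y := le_trans (by positivity) h1
    rw [abs_of_nonneg hf0y] at h2
    rw [hN2 y h1]
    set p := ψ y with hp
    set A := p / (1 - δ) with hA
    set B := (f0 y - p) / (1 - δ/2) with hB
    have e1 : A * (1 - δ) = p := div_mul_cancel₀ _ hd1.ne'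
    have e2 : B * (1 - δ/2) = f0 y - p := div_mul_cancel₀ _ hd2.ne'
    have hA0 : 0 ≤ A := div_nonneg (hψ0 y) hd1.le
    rw [div_mul_eq_mul_div, le_div_iff₀ hd4]
    nlinarith [mul_nonneg hA0 hδ0.le, norm_nonneg y]
  intro x hx
  by_cases h1 : (1 - δ) * ‖x‖ ≤ f0 x
  · exact key x h1 hx
  · by_cases h3 : f0 x ≤ -((1 - δ) * ‖x‖)
    · rw [hN3 x h3]
      have h1' : (1 - δ) * ‖(-x)‖ ≤ f0 (-x) := by
        rw [norm_neg, map_neg]; linarith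
      have h2' : (1 - δ/4) * ‖(-x)‖ ≤ |f0 (-x)| := by
        rw [norm_neg, map_neg, abs_neg]; exact hx
      have := key (-x) h1' h2'
      rwa [norm_neg] at this
    · exfalso
      push_neg at h1 h3
      have habs : |f0 x| < (1 - δ) * ‖x‖ := abs_lt.2 ⟨h3, h1⟩
      nlinarith [norm_nonneg x, le_trans hx habs.le]
end

section
/- Let $\Gamma$ be a set, $\gamma_0 \in \Gamma$, and $0 < \delta < 1/2$. In $c_0(\Gamma)$ with the supremum norm, let $|||\cdot||| = |||\cdot|||_{(e_{\gamma_0}, e_{\gamma_0}),\delta}$ be the norm defined via the pair $(e_{\gamma_0}, e_{\gamma_0}) \in c_0(\Gamma) \times \ell_1(\Gamma)$. Then $|||\cdot|||$ is a lattice norm: if $x, y \in c_0(\Gamma)$ with $|x(\gamma)| \leq |y(\gamma)|$ for all $\gamma \in \Gamma$, then $|||x||| \leq |||y|||$. -/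
open scoped ZeroAtInfty

theorem stmt_13 (Γ : Type*) [TopologicalSpace Γ] [DiscreteTopology Γ] [DecidableEq Γ] (γ0 : Γ)
    (δ : ℝ) (hδ0 : 0 < δ) (hδ1 : δ < 1/2)
    (e : ZeroAtInftyContinuousMap Γ ℝ) (he : ∀ γ : Γ, e γ = if γ = γ0 then 1 else 0)
    (ψ : ZeroAtInftyContinuousMap Γ ℝ → ℝ) (hψ0 : ∀ y, 0 ≤ ψ y)
    (hψeq : ∀ y : ZeroAtInftyContinuousMap Γ ℝ, ψ y = (1 - δ) * ‖y + (ψ y - y γ0) • e‖)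
    (hψuniq : ∀ (y : ZeroAtInftyContinuousMap Γ ℝ) (t : ℝ), 0 ≤ t →
      t = (1 - δ) * ‖y + (t - y γ0) • e‖ → t = ψ y)
    (N : ZeroAtInftyContinuousMap Γ ℝ → ℝ)
    (hN1 : ∀ y : ZeroAtInftyContinuousMap Γ ℝ, |y γ0| < (1 - δ) * ‖y‖ → N y = ‖y‖)
    (hN2 : ∀ y : ZeroAtInftyContinuousMap Γ ℝ, (1 - δ) * ‖y‖ ≤ y γ0 →
      N y = ψ y / (1 - δ) + (y γ0 - ψ y) / (1 - δ/2))
    (hN3 : ∀ y : ZeroAtInftyContinuousMap Γ ℝ, y γ0 ≤ -((1 - δ) * ‖y‖) → N y = N (-y)) :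
    ∀ x y : ZeroAtInftyContinuousMap Γ ℝ, (∀ γ : Γ, |x γ| ≤ |y γ|) → N x ≤ N y := by
  have hδ' : (0:ℝ) < 1 - δ := by linarith
  have hg : (0:ℝ) < 1 - δ/2 := by linarith
  -- pointwise evaluation bound
  have eval_le : ∀ (f : ZeroAtInftyContinuousMap Γ ℝ) (γ : Γ), |f γ| ≤ ‖f‖ := by
    intro f γ
    have := f.toBCF.norm_coe_le_norm γ
    simpa [ZeroAtInftyContinuousMap.norm_toBCF_eq_norm] using this
  -- sup-norm characterization
  have norm_le' : ∀ (f : ZeroAtInftyContinuousMap Γ ℝ) (C : ℝ), 0 ≤ C →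
      (∀ γ, |f γ| ≤ C) → ‖f‖ ≤ C := by
    intro f C hC h
    rw [← ZeroAtInftyContinuousMap.norm_toBCF_eq_norm]
    exact (BoundedContinuousFunction.norm_le hC).mpr (by intro γ; simpa using h γ)
  -- division helper
  have hdiv : ∀ a b c d : ℝ, a * (1 - δ/2) + b ≤ c * (1 - δ/2) + d →
      a + b / (1 - δ/2) ≤ c + d / (1 - δ/2) := by
    intro a b c d h
    have h2 : (a * (1 - δ/2) + b) / (1 - δ/2) ≤ (c * (1 - δ/2) + d) / (1 - δ/2) := by
      gcongr
    calc a + b / (1 - δ/2) = (a * (1 - δ/2) + b) / (1 - δ/2) := by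
          rw [add_div, mul_div_cancel_right₀ _ hg.ne']
      _ ≤ (c * (1 - δ/2) + d) / (1 - δ/2) := h2
      _ = c + d / (1 - δ/2) := by rw [add_div, mul_div_cancel_right₀ _ hg.ne']
  -- the "rest" part of a function
  have hz0 : ∀ w : ZeroAtInftyContinuousMap Γ ℝ, (w - w γ0 • e) γ0 = 0 := by
    intro w; simp [he γ0]
  have key : ∀ z : ZeroAtInftyContinuousMap Γ ℝ, z γ0 = 0 → ∀ t : ℝ,
      ‖z + t • e‖ = max ‖z‖ |t| := by
    intro z hz t
    apply le_antisymm
    · apply norm_le' _ _ (le_max_of_le_left (norm_nonneg z))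
      intro γ
      by_cases hγ : γ = γ0
      · have : (z + t • e) γ = t := by simp [hγ, he, hz]
        rw [this]; exact le_max_right _ _
      · have : (z + t • e) γ = z γ := by simp [he γ, hγ]
        rw [this]; exact le_max_of_le_left (eval_le z γ)
    · apply max_le
      · apply norm_le' _ _ (norm_nonneg _)
        intro γ
        by_cases hγ : γ = γ0
        · have : z γ = 0 := by rw [hγ, hz]
          rw [this]; simpa using norm_nonneg (z + t • e)
        · have : z γ = (z + t • e) γ := by simp [he γ, hγ]
          rw [this]; exact eval_le _ γ
      · have : (z + t • e) γ0 = t := by simp [he γ0, hz]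
        calc |t| = |(z + t • e) γ0| := by rw [this]
          _ ≤ _ := eval_le _ γ0
  have hnorm : ∀ w : ZeroAtInftyContinuousMap Γ ℝ, ‖w‖ = max ‖w - w γ0 • e‖ |w γ0| := by
    intro w
    have h := key (w - w γ0 • e) (hz0 w) (w γ0)
    rw [sub_add_cancel] at h
    exact h
  -- the value of ψ
  have hψ : ∀ w : ZeroAtInftyContinuousMap Γ ℝ, ψ w = (1 - δ) * ‖w - w γ0 • e‖ := by
    intro w
    symm
    apply hψuniq
    · positivity
    · have hw : w + ((1 - δ) * ‖w - w γ0 • e‖ - w γ0) • e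
          = (w - w γ0 • e) + ((1 - δ) * ‖w - w γ0 • e‖) • e := by module
      rw [hw, key _ (hz0 w)]
      have habs : |(1 - δ) * ‖w - w γ0 • e‖| = (1 - δ) * ‖w - w γ0 • e‖ :=
        abs_of_nonneg (by positivity)
      rw [habs, max_eq_left]
      nlinarith [norm_nonneg (w - w γ0 • e)]
  -- formula for N in the positive cone
  have NB : ∀ w : ZeroAtInftyContinuousMap Γ ℝ, (1 - δ) * ‖w‖ ≤ w γ0 →
      N w = ‖w - w γ0 • e‖ + (w γ0 - (1 - δ) * ‖w - w γ0 • e‖) / (1 - δ/2) := by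
    intro w hw
    rw [hN2 w hw, hψ w, mul_div_cancel_left₀ _ hδ'.ne']
  -- auxiliary: both x and y not in the negative cone
  have aux1 : ∀ u v : ZeroAtInftyContinuousMap Γ ℝ, (∀ γ, |u γ| ≤ |v γ|) →
      (|u γ0| < (1 - δ) * ‖u‖ ∨ (1 - δ) * ‖u‖ ≤ u γ0) →
      (|v γ0| < (1 - δ) * ‖v‖ ∨ (1 - δ) * ‖v‖ ≤ v γ0) → N u ≤ N v := by
    intro u v h hu hv
    have h0 : |u γ0| ≤ |v γ0| := h γ0
    have hs : ‖u - u γ0 • e‖ ≤ ‖v - v γ0 • e‖ := by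
      apply norm_le' _ _ (norm_nonneg _)
      intro γ
      by_cases hγ : γ = γ0
      · have : (u - u γ0 • e) γ = 0 := by rw [hγ]; exact hz0 u
        rw [this]; simpa using norm_nonneg (v - v γ0 • e)
      · have h1 : (u - u γ0 • e) γ = u γ := by simp [he γ, hγ]
        have h2 : (v - v γ0 • e) γ = v γ := by simp [he γ, hγ]
        rw [h1]
        calc |u γ| ≤ |v γ| := h γ
          _ = |(v - v γ0 • e) γ| := by rw [h2]
          _ ≤ _ := eval_le _ γ
    have hsu : ‖u - u γ0 • e‖ ≤ ‖u‖ := by rw [hnorm u]; exact le_max_left _ _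
    have hsv : ‖v - v γ0 • e‖ ≤ ‖v‖ := by rw [hnorm v]; exact le_max_left _ _
    have hn : ‖u‖ ≤ ‖v‖ := by
      rw [hnorm u, hnorm v]; exact max_le_max hs h0
    rcases hv with hvA | hvB
    · -- N v = ‖v‖
      rw [hN1 v hvA]
      rcases hu with huA | huB
      · rw [hN1 u huA]; exact hn
      · rw [NB u huB]
        have hu0 : 0 ≤ u γ0 := le_trans (by positivity) huB
        have hu0' : u γ0 ≤ (1 - δ) * ‖v‖ := by
          calc u γ0 ≤ |u γ0| := le_abs_self _
            _ ≤ |v γ0| := h0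
            _ ≤ (1 - δ) * ‖v‖ := hvA.le
        have := hdiv ‖u - u γ0 • e‖ (u γ0 - (1 - δ) * ‖u - u γ0 • e‖) ‖v‖ 0
          (by nlinarith [hs.trans hsv])
        simpa using this
    · -- N v in positive cone
      rw [NB v hvB]
      have hv0 : 0 ≤ v γ0 := le_trans (by positivity) hvB
      have hvabs : |v γ0| = v γ0 := abs_of_nonneg hv0
      have hsv' : (1 - δ) * ‖v - v γ0 • e‖ ≤ v γ0 := by nlinarith
      rcases hu with huA | huB
      · rw [hN1 u huA]
        -- ‖u‖ ≤ ‖v‖ ≤ N v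
        have h1 : v γ0 ≤ ‖v - v γ0 • e‖ + (v γ0 - (1 - δ) * ‖v - v γ0 • e‖) / (1 - δ/2) := by
          have := hdiv (v γ0) 0 ‖v - v γ0 • e‖ (v γ0 - (1 - δ) * ‖v - v γ0 • e‖)
            (by nlinarith [norm_nonneg (v - v γ0 • e)])
          simpa using this
        have h2 : ‖v - v γ0 • e‖ ≤ ‖v - v γ0 • e‖
            + (v γ0 - (1 - δ) * ‖v - v γ0 • e‖) / (1 - δ/2) := by
          have : 0 ≤ (v γ0 - (1 - δ) * ‖v - v γ0 • e‖) / (1 - δ/2) := by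
            apply div_nonneg _ hg.le; linarith
          linarith
        calc ‖u‖ ≤ ‖v‖ := hn
          _ = max ‖v - v γ0 • e‖ |v γ0| := hnorm v
          _ ≤ _ := by rw [hvabs]; exact max_le h2 h1
      · rw [NB u huB]
        have hu0 : 0 ≤ u γ0 := le_trans (by positivity) huB
        have h00 : u γ0 ≤ v γ0 := by rw [← hvabs, ← abs_of_nonneg hu0]; exact h0
        exact hdiv _ _ _ _ (by nlinarith)
  -- allow x in the negative cone
  have aux2 : ∀ u v : ZeroAtInftyContinuousMap Γ ℝ, (∀ γ, |u γ| ≤ |v γ|) →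
      (|v γ0| < (1 - δ) * ‖v‖ ∨ (1 - δ) * ‖v‖ ≤ v γ0) → N u ≤ N v := by
    intro u v h hv
    by_cases huA : |u γ0| < (1 - δ) * ‖u‖
    · exact aux1 u v h (Or.inl huA) hv
    · push_neg at huA
      rcases abs_choice (u γ0) with hc | hc
      · exact aux1 u v h (Or.inr (hc ▸ huA)) hv
      · have hneg : u γ0 ≤ -((1 - δ) * ‖u‖) := by
          have : (1 - δ) * ‖u‖ ≤ -u γ0 := hc ▸ huA
          linarith
        rw [hN3 u hneg]
        apply aux1 (-u) v _ _ hv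
        · intro γ
          have : (-u) γ = -(u γ) := by simp
          rw [this, abs_neg]; exact h γ
        · right
          have h1 : (-u) γ0 = -(u γ0) := by simp
          rw [h1, norm_neg]
          linarith
  intro x y hxy
  by_cases hyA : |y γ0| < (1 - δ) * ‖y‖
  · exact aux2 x y hxy (Or.inl hyA)
  · push_neg at hyA
    rcases abs_choice (y γ0) with hc | hc
    · exact aux2 x y hxy (Or.inr (hc ▸ hyA))
    · have hneg : y γ0 ≤ -((1 - δ) * ‖y‖) := by
        have : (1 - δ) * ‖y‖ ≤ -y γ0 := hc ▸ hyA
        linarith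
      rw [hN3 y hneg]
      apply aux2 x (-y) _ (Or.inr _)
      · intro γ
        have : (-y) γ = -(y γ) := by simp
        rw [this, abs_neg]; exact hxy γ
      · have h1 : (-y) γ0 = -(y γ0) := by simp
        rw [h1, norm_neg]
        linarith
end

section
/- Let $X$ be a real Banach space, $x_0, f_0, \delta$ as above with $|||\cdot|||_{(x_0,f_0),\delta}$ the associated norm. Let $\eta > 0$ and let $|||\cdot|||_\eta$ be a norm on $X$ with $|||\cdot|||_\eta \leq |||\cdot|||_{(x_0,f_0),\delta} \leq (1+\eta)|||\cdot|||_\eta$. Then for all $h$ with $\|h\| = 1$ and all $t$ with $0 < |t| < \frac{\delta(1-\delta/2)}{(1-\delta)+|\langle f_0,h\rangle|}$: $$\frac{|||(1-\delta/2)x_0+th|||_\eta + |||(1-\delta/2)x_0-th|||_\eta - 2|||(1-\delta/2)x_0|||_\eta}{|t|} \geq \frac{2}{1+\eta}\left(\frac{\delta-(4-\delta)|\langle f_0,h\rangle|}{2(1-\delta/2)(2-\delta)} - \frac{\eta}{|t|}\right).$$ -/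
/-!
Write `c = 1 - δ/2`, `u = c • x₀` and `w = h - ⟨f₀, h⟩ x₀`. For `|t|` below the stated bound both
points `u ± t h` lie in the cone `(1 - δ)‖y‖ ≤ f₀ y`, where
`N y = ψ y / (1 - δ) + (f₀ y - ψ y) / c`; the linear parts cancel in the second difference, which
therefore equals `(ψ(u + t h) + ψ(u - t h)) · δ / (2 (1 - δ) c)`. The fixed-point equation for `ψ`
bounds each `ψ(u ± t h)` below by `(1 - δ) |t| ‖w‖ / (2 - δ)`, and `‖w‖ ≥ 1 - |⟨f₀, h⟩|`.
Passing to the `(1 + η)`-equivalent norm costs the error term `η / |t|`.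
-/

theorem mul_norm_le_of_eq_mul_norm_add_smul {E : Type*} [SeminormedAddCommGroup E]
    [NormedSpace ℝ E] {x v : E} {k s : ℝ} (hx : ‖x‖ = 1) (hk : 0 ≤ k)
    (hs : s = k * ‖v + s • x‖) : k * ‖v‖ ≤ (1 + k) * s := by
  have hs0 : 0 ≤ s := hs ▸ by positivity
  have hv : ‖v‖ ≤ ‖v + s • x‖ + s :=
    calc ‖v‖ = ‖(v + s • x) - s • x‖ := by rw [add_sub_cancel_right]
      _ ≤ ‖v + s • x‖ + ‖s • x‖ := norm_sub_le _ _
      _ = ‖v + s • x‖ + s := by rw [norm_smul, hx, Real.norm_of_nonneg hs0, mul_one]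
  nlinarith [mul_le_mul_of_nonneg_left hv hk]

theorem eq_zero_of_eq_mul_abs_s14 {k s : ℝ} (hk0 : 0 ≤ k) (hk1 : k < 1) (hs : s = k * |s|) :
    s = 0 := by
  have hs0 : 0 ≤ s := hs ▸ by positivity
  rw [abs_of_nonneg hs0] at hs
  nlinarith

section

variable {X : Type*} [NormedAddCommGroup X] [NormedSpace ℝ X] {x₀ h : X} {f₀ : X →L[ℝ] ℝ}

theorem mul_norm_le_apply_of_abs_mul_le (hx₀ : ‖x₀‖ ≤ 1) (hfx : f₀ x₀ = 1) (hh : ‖h‖ ≤ 1)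
    {δ c r : ℝ} (hδ : δ ≤ 1) (hc : 0 ≤ c) (hr : |r| * ((1 - δ) + |f₀ h|) ≤ δ * c) :
    (1 - δ) * ‖c • x₀ + r • h‖ ≤ f₀ (c • x₀ + r • h) := by
  have hnorm : ‖c • x₀ + r • h‖ ≤ c + |r| :=
    calc ‖c • x₀ + r • h‖ ≤ ‖c • x₀‖ + ‖r • h‖ := norm_add_le _ _
      _ = |c| * ‖x₀‖ + |r| * ‖h‖ := by rw [norm_smul, norm_smul, Real.norm_eq_abs, Real.norm_eq_abs]
      _ ≤ c + |r| := by
        rw [abs_of_nonneg hc]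
        linarith [mul_le_mul_of_nonneg_left hx₀ hc, mul_le_mul_of_nonneg_left hh (abs_nonneg r)]
  have happly : c - |r| * |f₀ h| ≤ f₀ (c • x₀ + r • h) := by
    simp only [map_add, map_smul, hfx, smul_eq_mul, mul_one]
    nlinarith [neg_abs_le (r * f₀ h), abs_mul r (f₀ h)]
  nlinarith [mul_le_mul_of_nonneg_left hnorm (sub_nonneg.mpr hδ)]

theorem sub_apply_smul_eq_smul_sub (hfx : f₀ x₀ = 1) (c r : ℝ) :
    c • x₀ + r • h - f₀ (c • x₀ + r • h) • x₀ = r • (h - f₀ h • x₀) := by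
  simp only [map_add, map_smul, hfx, smul_eq_mul, mul_one]
  module

variable {δ : ℝ} {ψ : X → ℝ}

theorem mul_abs_mul_norm_le_of_eq_mul_norm (hx₀ : ‖x₀‖ = 1) (hfx : f₀ x₀ = 1) (hδ : δ ≤ 1)
    (hψeq : ∀ y, ψ y = (1 - δ) * ‖y + (ψ y - f₀ y) • x₀‖) (c r : ℝ) :
    (1 - δ) * (|r| * ‖h - f₀ h • x₀‖) ≤ (2 - δ) * ψ (c • x₀ + r • h) := by
  set y := c • x₀ + r • h
  have hy : y + (ψ y - f₀ y) • x₀ = r • (h - f₀ h • x₀) + ψ y • x₀ := by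
    rw [← sub_apply_smul_eq_smul_sub hfx c r]
    module
  have := mul_norm_le_of_eq_mul_norm_add_smul hx₀ (sub_nonneg.mpr hδ) (hy ▸ hψeq y)
  rw [norm_smul, Real.norm_eq_abs] at this
  linarith

theorem apply_one_sub_half_smul_eq_one (hx₀ : ‖x₀‖ = 1) (hfx : f₀ x₀ = 1) (hδ0 : 0 < δ) (hδ1 : δ < 1)
    (hψeq : ∀ y, ψ y = (1 - δ) * ‖y + (ψ y - f₀ y) • x₀‖) {N : X → ℝ}
    (hN : ∀ y, (1 - δ) * ‖y‖ ≤ f₀ y → N y = ψ y / (1 - δ) + (f₀ y - ψ y) / (1 - δ/2)) :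
    N ((1 - δ/2) • x₀) = 1 := by
  have hc0 : 0 < 1 - δ/2 := by linarith
  have hfu : f₀ ((1 - δ/2) • x₀) = 1 - δ/2 := by simp [hfx]
  have hψu : ψ ((1 - δ/2) • x₀) = 0 := by
    have hu := hψeq ((1 - δ/2) • x₀)
    rw [hfu, ← add_smul, add_sub_cancel, norm_smul, hx₀, mul_one, Real.norm_eq_abs] at hu
    exact eq_zero_of_eq_mul_abs_s14 (by linarith) (by linarith) hu
  rw [hN _ (by rw [hfu, norm_smul, hx₀, Real.norm_of_nonneg hc0.le]; nlinarith), hψu, hfu]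
  rw [zero_div, zero_add, sub_zero, div_self hc0.ne']

theorem mul_norm_div_le_second_diff (hx₀ : ‖x₀‖ = 1) (hfx : f₀ x₀ = 1) (hδ0 : 0 < δ) (hδ1 : δ < 1)
    (hψeq : ∀ y, ψ y = (1 - δ) * ‖y + (ψ y - f₀ y) • x₀‖) {N : X → ℝ}
    (hN : ∀ y, (1 - δ) * ‖y‖ ≤ f₀ y → N y = ψ y / (1 - δ) + (f₀ y - ψ y) / (1 - δ/2))
    (hh : ‖h‖ = 1) {t : ℝ} (ht : |t| * ((1 - δ) + |f₀ h|) ≤ δ * (1 - δ/2)) :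
    δ * |t| * ‖h - f₀ h • x₀‖ / ((1 - δ/2) * (2 - δ)) ≤
      N ((1 - δ/2) • x₀ + t • h) + N ((1 - δ/2) • x₀ - t • h) - 2 * N ((1 - δ/2) • x₀) := by
  set c := 1 - δ/2 with hc
  have hc0 : 0 < c := by linarith
  have hNu := apply_one_sub_half_smul_eq_one hx₀ hfx hδ0 hδ1 hψeq hN
  have hN_at (r : ℝ) (hr : |r| = |t|) :
      N (c • x₀ + r • h) = ψ (c • x₀ + r • h) / (1 - δ)
        + (c + r * f₀ h - ψ (c • x₀ + r • h)) / c := by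
    have hcone := mul_norm_le_apply_of_abs_mul_le hx₀.le hfx hh.le hδ1.le hc0.le (hr ▸ ht)
    rw [hN _ hcone]
    simp [hfx]
  have hminus : c • x₀ - t • h = c • x₀ + (-t) • h := by rw [neg_smul, sub_eq_add_neg]
  have hψ_pos := mul_abs_mul_norm_le_of_eq_mul_norm (h := h) hx₀ hfx hδ1.le hψeq c t
  have hψ_neg := mul_abs_mul_norm_le_of_eq_mul_norm (h := h) hx₀ hfx hδ1.le hψeq c (-t)
  rw [abs_neg] at hψ_neg
  rw [hminus, hN_at t rfl, hN_at (-t) (abs_neg t), hNu]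
  set sp := ψ (c • x₀ + t • h)
  set sm := ψ (c • x₀ + (-t) • h)
  have hidentity : sp / (1 - δ) + (c + t * f₀ h - sp) / c
      + (sm / (1 - δ) + (c + -t * f₀ h - sm) / c) - 2 * 1
      = (sp + sm) * δ / (2 * (1 - δ) * c) := by
    have : 1 - δ ≠ 0 := by linarith
    have : 2 - δ ≠ 0 := by linarith
    rw [hc]
    field_simp
    ring
  rw [hidentity, div_le_div_iff₀ (mul_pos hc0 (by linarith)) (by positivity)]
  nlinarith [mul_le_mul_of_nonneg_left (add_le_add hψ_pos hψ_neg) (mul_pos hδ0 hc0).le]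

end

theorem le_second_diff_div_of_le_of_le_mul {X : Type*} {N M : X → ℝ} {η : ℝ} (hη : 0 < 1 + η)
    (hle : ∀ y, M y ≤ N y) (hle' : ∀ y, N y ≤ (1 + η) * M y) {p q u : X} (hu : N u = 1)
    {K τ : ℝ} (hτ : 0 < τ) (hK : 2 * K * τ ≤ N p + N q - 2 * N u) :
    2 / (1 + η) * (K - η / τ) ≤ (M p + M q - 2 * M u) / τ := by
  have hM : 2 * (K * τ - η) ≤ (1 + η) * (M p + M q - 2 * M u) := by
    nlinarith [hle u, hle' p, hle' q]
  rw [div_mul_eq_mul_div, div_le_div_iff₀ hη hτ]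
  calc 2 * (K - η / τ) * τ = 2 * (K * τ - η) := by field_simp
    _ ≤ (1 + η) * (M p + M q - 2 * M u) := hM
    _ = _ := by ring

theorem stmt_14_general (X : Type*) [NormedAddCommGroup X] [NormedSpace ℝ X]
    (x0 : X) (f0 : X →L[ℝ] ℝ) (hx0 : ‖x0‖ = 1) (hfx : f0 x0 = 1)
    (δ : ℝ) (hδ0 : 0 < δ) (hδ1 : δ < 1/2)
    (ψ : X → ℝ)
    (hψeq : ∀ y, ψ y = (1 - δ) * ‖y + (ψ y - f0 y) • x0‖)
    (N : X → ℝ)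
    (hN2 : ∀ y, (1 - δ) * ‖y‖ ≤ f0 y → N y = ψ y / (1 - δ) + (f0 y - ψ y) / (1 - δ/2))
    (η : ℝ) (hη : 0 < η) (Nη : X → ℝ)
    (hle1 : ∀ y : X, Nη y ≤ N y) (hle2 : ∀ y : X, N y ≤ (1 + η) * Nη y) :
    ∀ h : X, ‖h‖ = 1 → ∀ t : ℝ, 0 < |t| → |t| < δ * (1 - δ/2) / ((1 - δ) + |f0 h|) →
      2 / (1 + η) * ((δ - (4 - δ) * |f0 h|) / (2 * (1 - δ/2) * (2 - δ)) - η / |t|) ≤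
        (Nη ((1 - δ/2) • x0 + t • h) + Nη ((1 - δ/2) • x0 - t • h)
          - 2 * Nη ((1 - δ/2) • x0)) / |t| := by
  intro h hh t ht0 ht
  have hδc : 0 < (1 - δ/2) * (2 - δ) := by nlinarith
  have ht' : |t| * ((1 - δ) + |f0 h|) ≤ δ * (1 - δ/2) :=
    ((lt_div_iff₀ (add_pos_of_pos_of_nonneg (by linarith) (abs_nonneg _))).mp ht).le
  have hw : 1 - |f0 h| ≤ ‖h - f0 h • x0‖ := by
    simpa [hh, norm_smul, hx0] using norm_sub_norm_le h (f0 h • x0)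
  have hsecond := mul_norm_div_le_second_diff hx0 hfx hδ0 (by linarith) hψeq hN2 hh ht'
  have hNu := apply_one_sub_half_smul_eq_one hx0 hfx hδ0 (by linarith) hψeq hN2
  refine le_second_diff_div_of_le_of_le_mul (by linarith) hle1 hle2 hNu ht0 (le_trans ?_ hsecond)
  calc 2 * ((δ - (4 - δ) * |f0 h|) / (2 * (1 - δ/2) * (2 - δ))) * |t|
      = (δ - (4 - δ) * |f0 h|) * |t| / ((1 - δ/2) * (2 - δ)) := by
        field_simp
    _ ≤ δ * |t| * ‖h - f0 h • x0‖ / ((1 - δ/2) * (2 - δ)) := by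
        refine div_le_div_of_nonneg_right ?_ hδc.le
        nlinarith [mul_le_mul_of_nonneg_left hw (mul_nonneg hδ0.le (abs_nonneg t)),
          mul_nonneg (abs_nonneg (f0 h)) (abs_nonneg t)]

theorem stmt_14 (X : Type*) [NormedAddCommGroup X] [NormedSpace ℝ X] [CompleteSpace X]
    (x0 : X) (f0 : X →L[ℝ] ℝ) (hx0 : ‖x0‖ = 1) (hf0 : ‖f0‖ = 1) (hfx : f0 x0 = 1)
    (δ : ℝ) (hδ0 : 0 < δ) (hδ1 : δ < 1/2)
    (ψ : X → ℝ) (hψ0 : ∀ y, 0 ≤ ψ y)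
    (hψeq : ∀ y, ψ y = (1 - δ) * ‖y + (ψ y - f0 y) • x0‖)
    (hψuniq : ∀ y t, 0 ≤ t → t = (1 - δ) * ‖y + (t - f0 y) • x0‖ → t = ψ y)
    (N : X → ℝ)
    (hN1 : ∀ y, |f0 y| < (1 - δ) * ‖y‖ → N y = ‖y‖)
    (hN2 : ∀ y, (1 - δ) * ‖y‖ ≤ f0 y → N y = ψ y / (1 - δ) + (f0 y - ψ y) / (1 - δ/2))
    (hN3 : ∀ y, f0 y ≤ -((1 - δ) * ‖y‖) → N y = N (-y))
    (η : ℝ) (hη : 0 < η) (Nη : X → ℝ)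
    (hNηnorm : (∀ (a : ℝ) (y : X), Nη (a • y) = |a| * Nη y) ∧
      (∀ y z : X, Nη (y + z) ≤ Nη y + Nη z) ∧ (∀ y : X, Nη y = 0 → y = 0))
    (hle1 : ∀ y : X, Nη y ≤ N y) (hle2 : ∀ y : X, N y ≤ (1 + η) * Nη y) :
    ∀ h : X, ‖h‖ = 1 → ∀ t : ℝ, 0 < |t| → |t| < δ * (1 - δ/2) / ((1 - δ) + |f0 h|) →
      2 / (1 + η) * ((δ - (4 - δ) * |f0 h|) / (2 * (1 - δ/2) * (2 - δ)) - η / |t|) ≤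
        (Nη ((1 - δ/2) • x0 + t • h) + Nη ((1 - δ/2) • x0 - t • h)
          - 2 * Nη ((1 - δ/2) • x0)) / |t| :=
  stmt_14_general X x0 f0 hx0 hfx δ hδ0 hδ1 ψ hψeq N hN2 η hη Nη hle1 hle2
end

section
/- Let $X$ be a real Banach space, $x_0, f_0, \delta$ as above with associated norm $|||\cdot|||_{(x_0,f_0),\delta}$, let $\eta > 0$ and let $|||\cdot|||_\eta$ be a norm with $|||\cdot|||_\eta \leq |||\cdot|||_{(x_0,f_0),\delta} \leq (1+\eta)|||\cdot|||_\eta$. Then for all $\varepsilon > 0$, the slice $\{x : |||x|||_\eta \leq 1, \langle f_0,x\rangle > 1-\delta/2-\varepsilon\}$ has diameter, measured in $|||\cdot|||_{(x_0,f_0),\delta}$, at most $\frac{8-2\delta}{\delta}(\varepsilon + \eta(1-\delta/2))$. -/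
private lemma psi_le_aux {X : Type*} [NormedAddCommGroup X] [NormedSpace ℝ X]
    (x0 : X) (f0 : X →L[ℝ] ℝ) (hx0 : ‖x0‖ = 1)
    (δ : ℝ) (hδ0 : 0 < δ) (hδ1 : δ < 1/2)
    (ψ : X → ℝ)
    (hψeq : ∀ y, ψ y = (1 - δ) * ‖y + (ψ y - f0 y) • x0‖)
    (y : X) (hreg : (1 - δ) * ‖y‖ ≤ f0 y) : ψ y ≤ f0 y := by
  have hδA : (0:ℝ) < 1 - δ := by linarith
  by_contra hlt
  push_neg at hlt
  have h := hψeq y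
  have htri : ‖y + (ψ y - f0 y) • x0‖ ≤ ‖y‖ + (ψ y - f0 y) := by
    calc ‖y + (ψ y - f0 y) • x0‖ ≤ ‖y‖ + ‖(ψ y - f0 y) • x0‖ := norm_add_le _ _
      _ = ‖y‖ + |ψ y - f0 y| := by rw [norm_smul, hx0, Real.norm_eq_abs, mul_one]
      _ = ‖y‖ + (ψ y - f0 y) := by rw [abs_of_pos (by linarith)]
  nlinarith [mul_le_mul_of_nonneg_left htri hδA.le, hreg, hlt, hδ0, h]

private lemma Nreg2_aux {X : Type*} [NormedAddCommGroup X] [NormedSpace ℝ X]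
    (x0 : X) (f0 : X →L[ℝ] ℝ) (hx0 : ‖x0‖ = 1)
    (δ : ℝ) (hδ0 : 0 < δ) (hδ1 : δ < 1/2)
    (ψ : X → ℝ) (hψ0 : ∀ y, 0 ≤ ψ y)
    (hψeq : ∀ y, ψ y = (1 - δ) * ‖y + (ψ y - f0 y) • x0‖)
    (N : X → ℝ)
    (hN2 : ∀ y, (1 - δ) * ‖y‖ ≤ f0 y → N y = ψ y / (1 - δ) + (f0 y - ψ y) / (1 - δ/2))
    (y : X) (hreg : (1 - δ) * ‖y‖ ≤ f0 y) :
    0 ≤ N y ∧ (1 - δ) * N y ≤ f0 y := by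
  have hδA : (0:ℝ) < 1 - δ := by linarith
  have hδB : (0:ℝ) < 1 - δ/2 := by linarith
  have hψle := psi_le_aux x0 f0 hx0 δ hδ0 hδ1 ψ hψeq y hreg
  have hval := hN2 y hreg
  constructor
  · rw [hval]
    exact add_nonneg (div_nonneg (hψ0 y) hδA.le) (div_nonneg (by linarith) hδB.le)
  · rw [hval, div_add_div _ _ hδA.ne' hδB.ne', ← mul_div_assoc,
      div_le_iff₀ (mul_pos hδA hδB)]
    nlinarith [hψ0 y, hψle, hδA, hδ0, mul_nonneg (sub_nonneg.mpr hψle) hδ0.le]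

set_option maxHeartbeats 1600000 in
theorem stmt_15 (X : Type*) [NormedAddCommGroup X] [NormedSpace ℝ X] [CompleteSpace X]
    (x0 : X) (f0 : X →L[ℝ] ℝ) (hx0 : ‖x0‖ = 1) (hf0 : ‖f0‖ = 1) (hfx : f0 x0 = 1)
    (δ : ℝ) (hδ0 : 0 < δ) (hδ1 : δ < 1/2)
    (ψ : X → ℝ) (hψ0 : ∀ y, 0 ≤ ψ y)
    (hψeq : ∀ y, ψ y = (1 - δ) * ‖y + (ψ y - f0 y) • x0‖)
    (hψuniq : ∀ y t, 0 ≤ t → t = (1 - δ) * ‖y + (t - f0 y) • x0‖ → t = ψ y)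
    (N : X → ℝ)
    (hN1 : ∀ y, |f0 y| < (1 - δ) * ‖y‖ → N y = ‖y‖)
    (hN2 : ∀ y, (1 - δ) * ‖y‖ ≤ f0 y → N y = ψ y / (1 - δ) + (f0 y - ψ y) / (1 - δ/2))
    (hN3 : ∀ y, f0 y ≤ -((1 - δ) * ‖y‖) → N y = N (-y))
    (η : ℝ) (hη : 0 < η) (Nη : X → ℝ)
    (hNηnorm : (∀ (a : ℝ) (y : X), Nη (a • y) = |a| * Nη y) ∧
      (∀ y z : X, Nη (y + z) ≤ Nη y + Nη z) ∧ (∀ y : X, Nη y = 0 → y = 0))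
    (hle1 : ∀ y : X, Nη y ≤ N y) (hle2 : ∀ y : X, N y ≤ (1 + η) * Nη y) :
    ∀ ε : ℝ, 0 < ε →
      ∀ x ∈ {z : X | Nη z ≤ 1 ∧ 1 - δ/2 - ε < f0 z},
        ∀ y ∈ {z : X | Nη z ≤ 1 ∧ 1 - δ/2 - ε < f0 z},
          N (x - y) ≤ (8 - 2*δ) / δ * (ε + η * (1 - δ/2)) := by
  obtain ⟨hsm, htri, _⟩ := hNηnorm
  intro ε hε x hx y hy
  simp only [Set.mem_setOf_eq] at hx hy
  obtain ⟨hx1, hx2⟩ := hx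
  obtain ⟨hy1, hy2⟩ := hy
  have hδA : (0:ℝ) < 1 - δ := by linarith
  have hδB : (0:ℝ) < 1 - δ/2 := by linarith
  have hr : (0:ℝ) < 1 + η := by linarith
  set e : ℝ := (ε + η * (1 - δ/2)) / (1 + η) with he_def
  have he0 : 0 < e := div_pos (by nlinarith) hr
  have hre : (1 + η) * e = ε + η * (1 - δ/2) := by
    rw [he_def]; field_simp
  rcases le_or_gt e (δ/2) with hcase | hcase
  · -- main case: slice estimate
    have hP0 : 0 < (1 + η) * e := mul_pos hr he0
    have hlb_eq : (1 + η) * (1 - δ/2) - (1 + η) * e = 1 - δ/2 - ε := by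
      rw [hre]; ring
    have hfx_lb : (1 + η) * (1 - δ/2) - (1 + η) * e < f0 x := by linarith
    have hfy_lb : (1 + η) * (1 - δ/2) - (1 + η) * e < f0 y := by linarith
    have hfact : ∀ u : X, Nη u ≤ 1 → (1 + η) * (1 - δ/2) - (1 + η) * e < f0 u →
        δ * ψ u ≤ 2 * (1 - δ) * ((1 + η) * e) ∧ f0 u ≤ (1 + η) * (1 - δ/2) := by
      intro u hu1 hu2
      have hNu : N u ≤ 1 + η := by
        calc N u ≤ (1 + η) * Nη u := hle2 u
          _ ≤ (1 + η) * 1 := mul_le_mul_of_nonneg_left hu1 hr.le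
          _ = 1 + η := mul_one _
      have hreg : (1 - δ) * ‖u‖ ≤ f0 u := by
        rcases le_or_gt ((1 - δ) * ‖u‖) (f0 u) with h | h
        · exact h
        rcases lt_or_ge (-((1 - δ) * ‖u‖)) (f0 u) with h2 | h2
        · have habs : |f0 u| < (1 - δ) * ‖u‖ := abs_lt.mpr ⟨h2, h⟩
          have hNeq := hN1 u habs
          have hun : ‖u‖ ≤ 1 + η := by rw [← hNeq]; exact hNu
          nlinarith [mul_le_mul_of_nonneg_left hun hδA.le,
            mul_le_mul_of_nonneg_left hcase hr.le, hu2, h]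
        · nlinarith [mul_le_mul_of_nonneg_left hcase hr.le,
            mul_nonneg hδA.le (norm_nonneg u), mul_pos hr hδA, hu2, h2]
      have hval := hN2 u hreg
      have hψle := psi_le_aux x0 f0 hx0 δ hδ0 hδ1 ψ hψeq u hreg
      rw [hval, div_add_div _ _ hδA.ne' hδB.ne', div_le_iff₀ (mul_pos hδA hδB)] at hNu
      constructor
      · have hp := mul_lt_mul_of_pos_right hu2 hδA
        linarith only [hNu, hp]
      · by_contra hcon
        push_neg at hcon
        have hp := mul_lt_mul_of_pos_right hcon hδA
        linarith only [hNu, hp, mul_nonneg (hψ0 u) hδ0.le]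
    obtain ⟨hx3, hx4⟩ := hfact x hx1 hfx_lb
    obtain ⟨hy3, hy4⟩ := hfact y hy1 hfy_lb
    -- decomposition of x - y
    have hwxn : (1 - δ) * ‖x + (ψ x - f0 x) • x0‖ = ψ x := (hψeq x).symm
    have hwyn : (1 - δ) * ‖y + (ψ y - f0 y) • x0‖ = ψ y := (hψeq y).symm
    have hwxb : δ * ‖x + (ψ x - f0 x) • x0‖ ≤ 2 * ((1 + η) * e) := by
      by_contra hcon
      push_neg at hcon
      have hp := mul_lt_mul_of_pos_left hcon hδA
      have hq : δ * ((1 - δ) * ‖x + (ψ x - f0 x) • x0‖) = δ * ψ x := by rw [hwxn]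
      linarith only [hp, hq, hx3]
    have hwyb : δ * ‖y + (ψ y - f0 y) • x0‖ ≤ 2 * ((1 + η) * e) := by
      by_contra hcon
      push_neg at hcon
      have hp := mul_lt_mul_of_pos_left hcon hδA
      have hq : δ * ((1 - δ) * ‖y + (ψ y - f0 y) • x0‖) = δ * ψ y := by rw [hwyn]
      linarith only [hp, hq, hy3]
    set c : ℝ := (f0 x - ψ x) - (f0 y - ψ y) with hc_def
    have hc1 : c * δ ≤ (2 - δ) * ((1 + η) * e) := by
      have h1 : δ * f0 x ≤ δ * ((1 + η) * (1 - δ/2)) := mul_le_mul_of_nonneg_left hx4 hδ0.le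
      have h2 : δ * ((1 + η) * (1 - δ/2) - (1 + η) * e) < δ * f0 y :=
        mul_lt_mul_of_pos_left hfy_lb hδ0
      have h3 : 0 ≤ δ * ψ x := mul_nonneg hδ0.le (hψ0 x)
      rw [hc_def]; linarith only [h1, h2, h3, hy3]
    have hc2 : -((2 - δ) * ((1 + η) * e)) ≤ c * δ := by
      have h1 : δ * f0 y ≤ δ * ((1 + η) * (1 - δ/2)) := mul_le_mul_of_nonneg_left hy4 hδ0.le
      have h2 : δ * ((1 + η) * (1 - δ/2) - (1 + η) * e) < δ * f0 x :=
        mul_lt_mul_of_pos_left hfx_lb hδ0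
      have h3 : 0 ≤ δ * ψ y := mul_nonneg hδ0.le (hψ0 y)
      rw [hc_def]; linarith only [h1, h2, h3, hx3]
    have hcabs : |c| * δ ≤ (2 - δ) * ((1 + η) * e) := by
      rcases abs_cases c with ⟨hceq, _⟩ | ⟨hceq, _⟩ <;> rw [hceq] <;>
        linarith only [hc1, hc2]
    have hdecomp : x - y = (x + (ψ x - f0 x) • x0) - (y + (ψ y - f0 y) • x0) + c • x0 := by
      rw [hc_def]; module
    have hzn : ‖x - y‖ ≤ ‖x + (ψ x - f0 x) • x0‖ + ‖y + (ψ y - f0 y) • x0‖ + |c| := by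
      calc ‖x - y‖ = ‖(x + (ψ x - f0 x) • x0) - (y + (ψ y - f0 y) • x0) + c • x0‖ := by
            rw [← hdecomp]
        _ ≤ ‖(x + (ψ x - f0 x) • x0) - (y + (ψ y - f0 y) • x0)‖ + ‖c • x0‖ := norm_add_le _ _
        _ ≤ ‖x + (ψ x - f0 x) • x0‖ + ‖y + (ψ y - f0 y) • x0‖ + ‖c • x0‖ := by
            have := norm_sub_le (x + (ψ x - f0 x) • x0) (y + (ψ y - f0 y) • x0)
            linarith
        _ = ‖x + (ψ x - f0 x) • x0‖ + ‖y + (ψ y - f0 y) • x0‖ + |c| := by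
            rw [norm_smul, hx0, Real.norm_eq_abs, mul_one]
    have hznorm : δ * ‖x - y‖ ≤ (6 - δ) * ((1 + η) * e) := by
      have hp := mul_le_mul_of_nonneg_left hzn hδ0.le
      linarith only [hp, hwxb, hwyb, hcabs]
    have hfz : f0 (x - y) = f0 x - f0 y := map_sub f0 x y
    have hfz_ub : f0 x - f0 y < (1 + η) * e := by linarith
    have hfz_lb : f0 y - f0 x < (1 + η) * e := by linarith
    rw [← hre, div_mul_eq_mul_div, le_div_iff₀ hδ0]
    rcases le_or_gt ((1 - δ) * ‖x - y‖) (f0 (x - y)) with h | h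
    · obtain ⟨hN0, hNle⟩ := Nreg2_aux x0 f0 hx0 δ hδ0 hδ1 ψ hψ0 hψeq N hN2 (x - y) h
      have h6 : N (x - y) * δ ≤ N (x - y) * (1 - δ) :=
        mul_le_mul_of_nonneg_left (show δ ≤ 1 - δ by linarith) hN0
      have h7 : (1 + η) * e ≤ (8 - 2*δ) * ((1 + η) * e) := by
        nlinarith [hP0, hδ0, hδ1]
      linarith only [h6, hNle, hfz, hfz_ub, h7]
    · rcases lt_or_ge (-((1 - δ) * ‖x - y‖)) (f0 (x - y)) with h2 | h2
      · have habs : |f0 (x - y)| < (1 - δ) * ‖x - y‖ := abs_lt.mpr ⟨h2, h⟩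
        rw [hN1 _ habs]
        have h7 : 0 ≤ (2 - δ) * ((1 + η) * e) :=
          mul_nonneg (by linarith) hP0.le
        linarith only [hznorm, h7]
      · rw [hN3 _ h2]
        have hreg' : (1 - δ) * ‖-(x - y)‖ ≤ f0 (-(x - y)) := by
          rw [norm_neg, map_neg]; linarith
        obtain ⟨hN0, hNle⟩ := Nreg2_aux x0 f0 hx0 δ hδ0 hδ1 ψ hψ0 hψeq N hN2 (-(x - y)) hreg'
        have hfz' : f0 (-(x - y)) = f0 y - f0 x := by rw [map_neg, hfz]; ring
        have h6 : N (-(x - y)) * δ ≤ N (-(x - y)) * (1 - δ) :=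
          mul_le_mul_of_nonneg_left (show δ ≤ 1 - δ by linarith) hN0
        have h7 : (1 + η) * e ≤ (8 - 2*δ) * ((1 + η) * e) := by
          nlinarith [hP0, hδ0, hδ1]
        linarith only [h6, hNle, hfz', hfz_lb, h7]
  · -- trivial case: e > δ/2
    have hneg : Nη (-y) = Nη y := by
      rw [← neg_one_smul ℝ y, hsm]; norm_num
    have h2 : Nη (x - y) ≤ Nη x + Nη y := by
      rw [sub_eq_add_neg]
      calc Nη (x + -y) ≤ Nη x + Nη (-y) := htri x (-y)
        _ = Nη x + Nη y := by rw [hneg]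
    have h3 : N (x - y) ≤ (1 + η) * 2 := by
      calc N (x - y) ≤ (1 + η) * Nη (x - y) := hle2 _
        _ ≤ (1 + η) * 2 := mul_le_mul_of_nonneg_left (by linarith) hr.le
    have hK : (1 + η) * (δ/2) < ε + η * (1 - δ/2) := by
      rw [← hre]; exact (mul_lt_mul_iff_right₀ hr).mpr hcase
    rw [div_mul_eq_mul_div, le_div_iff₀ hδ0]
    have h4 : N (x - y) * δ ≤ (1 + η) * 2 * δ := mul_le_mul_of_nonneg_right h3 hδ0.le
    have h5 : (8 - 2*δ) * ((1 + η) * (δ/2)) ≤ (8 - 2*δ) * (ε + η * (1 - δ/2)) :=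
      mul_le_mul_of_nonneg_left hK.le (by linarith)
    have h6 : 0 ≤ (2 - δ) * ((1 + η) * δ) :=
      mul_nonneg (by linarith) (mul_pos hr hδ0).le
    linarith only [h4, h5, h6]
end
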